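/- arXiv:2104.03219 — 5 statements merged into one kernel-verified Lean document; each statement's English description precedes it below -/
import Mathlib

section
/- In any minimum-cost matching between points R and D on [0,ℓ] (with possible penalty ν for unmatched riders), any two overlapping matched pairs are oriented in the same direction: if pairs (r₁,d₁) and (r₂,d₂) overlap (the open intervals between their endpoints intersect) and r₁ < d₁, then r₂ < d₂. -/
/-- `M` is a matching between the riders `R` and the drivers `D`: every pair consists of a
rider and a driver, and each rider and each driver belongs to at most one pair. -/
def IsMatching (R D : Finset ℝ) (M : Finset (ℝ × ℝ)) : Prop :=
  (∀ p ∈ M, p.1 ∈ R ∧ p.2 ∈ D) ∧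
  (∀ p ∈ M, ∀ q ∈ M, p.1 = q.1 → p = q) ∧
  (∀ p ∈ M, ∀ q ∈ M, p.2 = q.2 → p = q)

/-- The cost of a matching: the sum of the distances of the matched pairs plus a penalty `ν`
for each unmatched rider. -/
noncomputable def matchingCost (ν : ℝ) (R : Finset ℝ) (M : Finset (ℝ × ℝ)) : ℝ :=
  (∑ p ∈ M, |p.1 - p.2|) + ν * ((R.card : ℝ) - M.card)

/-- In any minimum-cost matching (with penalty `ν` for unmatched riders), any two
overlapping pairs are oriented in the same direction: if the open intervals spanned by
`e₁` and `e₂` intersect and `e₁` is oriented to the right, then so is `e₂`. -/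
theorem overlapping_pairs_same_orientation (R D : Finset ℝ) (ν : ℝ) (M : Finset (ℝ × ℝ))
    (hM : IsMatching R D M)
    (hmin : ∀ M', IsMatching R D M' → matchingCost ν R M ≤ matchingCost ν R M')
    (e₁ e₂ : ℝ × ℝ) (h₁ : e₁ ∈ M) (h₂ : e₂ ∈ M)
    (hover : (Set.Ioo (min e₁.1 e₁.2) (max e₁.1 e₁.2) ∩
        Set.Ioo (min e₂.1 e₂.2) (max e₂.1 e₂.2)).Nonempty)
    (hor : e₁.1 < e₁.2) : e₂.1 < e₂.2 := by
  by_contra hcon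
  push_neg at hcon
  obtain ⟨x, ⟨hxa, hxb⟩, hxc, hxd⟩ := hover
  rw [min_eq_left hor.le] at hxa
  rw [max_eq_right hor.le] at hxb
  have h21 : e₂.2 < e₂.1 := by
    rcases lt_or_eq_of_le hcon with h | h
    · exact h
    · rw [h] at hxc hxd
      rw [min_self] at hxc
      rw [max_self] at hxd
      linarith
  rw [min_eq_right h21.le] at hxc
  rw [max_eq_left h21.le] at hxd
  obtain ⟨hmem, hfst, hsnd⟩ := hM
  have hne12fst : e₁.1 ≠ e₂.1 := by
    intro h
    have := hfst e₁ h₁ e₂ h₂ h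
    rw [this] at hor; linarith
  have hne12snd : e₁.2 ≠ e₂.2 := by
    intro h
    have := hsnd e₁ h₁ e₂ h₂ h
    rw [this] at hor; linarith
  have hne : e₁ ≠ e₂ := fun h => hne12fst (by rw [h])
  have hf₁M : ((e₁.1, e₂.2) : ℝ × ℝ) ∉ M := by
    intro h
    have h2 := hfst _ h e₁ h₁ rfl
    rw [Prod.ext_iff] at h2
    exact hne12snd h2.2.symm
  have hf₂M : ((e₂.1, e₁.2) : ℝ × ℝ) ∉ M := by
    intro h
    have h2 := hfst _ h e₂ h₂ rfl
    rw [Prod.ext_iff] at h2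
    exact hne12snd h2.2
  set S : Finset (ℝ × ℝ) := (M.erase e₁).erase e₂ with hS
  have he₂e : e₂ ∈ M.erase e₁ := Finset.mem_erase.mpr ⟨hne.symm, h₂⟩
  have hSsub : S ⊆ M := (Finset.erase_subset _ _).trans (Finset.erase_subset _ _)
  have hSfacts : ∀ p ∈ S, p ∈ M ∧ p ≠ e₁ ∧ p ≠ e₂ := by
    intro p hp
    rw [hS, Finset.mem_erase, Finset.mem_erase] at hp
    exact ⟨hp.2.2, hp.2.1, hp.1⟩
  have he₁S : e₁ ∉ S := fun h => (hSfacts _ h).2.1 rfl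
  have he₂S : e₂ ∉ S := fun h => (hSfacts _ h).2.2 rfl
  have hMrep : M = insert e₁ (insert e₂ S) := by
    rw [hS, Finset.insert_erase he₂e, Finset.insert_erase h₁]
  set M' : Finset (ℝ × ℝ) :=
    insert (e₁.1, e₂.2) (insert (e₂.1, e₁.2) S) with hM'
  have hf₁ne : ((e₁.1, e₂.2) : ℝ × ℝ) ≠ ((e₂.1, e₁.2) : ℝ × ℝ) := by
    intro h
    rw [Prod.ext_iff] at h
    exact hne12fst h.1
  have hf₁nmem : ((e₁.1, e₂.2) : ℝ × ℝ) ∉ insert ((e₂.1, e₁.2) : ℝ × ℝ) S := by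
    simp only [Finset.mem_insert]
    rintro (h | h)
    · exact hf₁ne h
    · exact hf₁M (hSsub h)
  have hf₂nmem : ((e₂.1, e₁.2) : ℝ × ℝ) ∉ S := fun h => hf₂M (hSsub h)
  have he₁nmem : e₁ ∉ insert e₂ S := by
    simp only [Finset.mem_insert]
    rintro (h | h)
    · exact hne h
    · exact he₁S h
  -- M' is a matching
  have hmem' : ∀ p ∈ M', p.1 ∈ R ∧ p.2 ∈ D := by
    intro p hp
    rw [hM'] at hp
    simp only [Finset.mem_insert] at hp
    rcases hp with h | h | h
    · subst h; exact ⟨(hmem e₁ h₁).1, (hmem e₂ h₂).2⟩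
    · subst h; exact ⟨(hmem e₂ h₂).1, (hmem e₁ h₁).2⟩
    · exact hmem p (hSsub h)
  have hfst' : ∀ p ∈ M', ∀ q ∈ M', p.1 = q.1 → p = q := by
    intro p hp q hq hpq
    rw [hM'] at hp hq
    simp only [Finset.mem_insert] at hp hq
    rcases hp with hp | hp | hp <;> rcases hq with hq | hq | hq <;>
      (try (subst hp)) <;> (try (subst hq)) <;> try rfl
    · exact absurd hpq hne12fst
    · exact absurd ((hSfacts q hq).2.1) (by
        have := hfst e₁ h₁ q (hSsub hq) hpq
        simp [← this])
    · exact absurd hpq.symm hne12fst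
    · exact absurd ((hSfacts q hq).2.2) (by
        have := hfst e₂ h₂ q (hSsub hq) hpq
        simp [← this])
    · exact absurd ((hSfacts p hp).2.1) (by
        have := hfst p (hSsub hp) e₁ h₁ hpq
        simp [this])
    · exact absurd ((hSfacts p hp).2.2) (by
        have := hfst p (hSsub hp) e₂ h₂ hpq
        simp [this])
    · exact hfst p (hSsub hp) q (hSsub hq) hpq
  have hsnd' : ∀ p ∈ M', ∀ q ∈ M', p.2 = q.2 → p = q := by
    intro p hp q hq hpq
    rw [hM'] at hp hq
    simp only [Finset.mem_insert] at hp hq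
    rcases hp with hp | hp | hp <;> rcases hq with hq | hq | hq <;>
      (try (subst hp)) <;> (try (subst hq)) <;> try rfl
    · exact absurd hpq.symm hne12snd
    · exact absurd ((hSfacts q hq).2.2) (by
        have := hsnd e₂ h₂ q (hSsub hq) hpq
        simp [← this])
    · exact absurd hpq hne12snd
    · exact absurd ((hSfacts q hq).2.1) (by
        have := hsnd e₁ h₁ q (hSsub hq) hpq
        simp [← this])
    · exact absurd ((hSfacts p hp).2.2) (by
        have := hsnd p (hSsub hp) e₂ h₂ hpq
        simp [this])
    · exact absurd ((hSfacts p hp).2.1) (by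
        have := hsnd p (hSsub hp) e₁ h₁ hpq
        simp [this])
    · exact hsnd p (hSsub hp) q (hSsub hq) hpq
  have hM'match : IsMatching R D M' := ⟨hmem', hfst', hsnd'⟩
  -- cards are equal
  have hcard : (M'.card : ℝ) = (M.card : ℝ) := by
    rw [hM', hMrep, Finset.card_insert_of_notMem hf₁nmem,
      Finset.card_insert_of_notMem hf₂nmem,
      Finset.card_insert_of_notMem he₁nmem,
      Finset.card_insert_of_notMem he₂S]
  -- sum comparison
  have hsumM : (∑ p ∈ M, |p.1 - p.2|) =
      |e₁.1 - e₁.2| + |e₂.1 - e₂.2| + ∑ p ∈ S, |p.1 - p.2| := by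
    rw [hMrep, Finset.sum_insert he₁nmem, Finset.sum_insert he₂S]; ring
  have hsumM' : (∑ p ∈ M', |p.1 - p.2|) =
      |e₁.1 - e₂.2| + |e₂.1 - e₁.2| + ∑ p ∈ S, |p.1 - p.2| := by
    rw [hM', Finset.sum_insert hf₁nmem, Finset.sum_insert hf₂nmem]; ring
  have key : |e₁.1 - e₂.2| + |e₂.1 - e₁.2| < |e₁.1 - e₁.2| + |e₂.1 - e₂.2| := by
    rw [abs_of_neg (by linarith : e₁.1 - e₁.2 < 0),
      abs_of_pos (by linarith : (0:ℝ) < e₂.1 - e₂.2)]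
    rcases abs_cases (e₁.1 - e₂.2) with ⟨h1, _⟩ | ⟨h1, _⟩ <;>
      rcases abs_cases (e₂.1 - e₁.2) with ⟨h2, _⟩ | ⟨h2, _⟩ <;> rw [h1, h2] <;> linarith
  have := hmin M' hM'match
  rw [matchingCost, matchingCost, hsumM, hsumM', hcard] at this
  linarith
end

section
/- Consider n riders and m drivers placed i.i.d. uniformly at random on [0,ℓ], and the walk W on [0,ℓ] that increments by 1 at each driver and decrements by 1 at each rider. Let γ₀ be the last time the walk is at level 0, and let Ĥ₀ be the number of rider/driver points in [0,γ₀]. Then P(Ĥ₀ = 2k) = ((m−n)/(m+n−2k)) · C(2k,k) · C(m+n−2k, n−k) / C(m+n, n), for m > n and 0 ≤ k ≤ n. -/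
/-- The height (level) of the lattice path encoded by `f` (with `true` an up-step
and `false` a down-step) after the first `j` steps. -/
def height (N : ℕ) (f : Fin N → Bool) (j : ℕ) : ℤ :=
  ((Finset.univ.filter fun i : Fin N => i.1 < j ∧ f i = true).card : ℤ)
    - ((Finset.univ.filter fun i : Fin N => i.1 < j ∧ f i = false).card : ℤ)

/-- The number of up-steps of the lattice path encoded by `f`. -/
def ups (N : ℕ) (f : Fin N → Bool) : ℕ :=
  (Finset.univ.filter fun i : Fin N => f i = true).card

open Finset

lemma height_eq_sum (N : ℕ) (f : Fin N → Bool) (j : ℕ) :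
    height N f j = ∑ i : Fin N, if i.1 < j then (if f i = true then (1:ℤ) else -1) else 0 := by
  unfold height
  rw [Finset.card_filter, Finset.card_filter]
  push_cast
  rw [← Finset.sum_sub_distrib]
  refine Finset.sum_congr rfl fun i _ => ?_
  by_cases h1 : i.1 < j <;> by_cases h2 : f i = true <;>
    simp [h1, h2]

lemma ups_cast (N : ℕ) (f : Fin N → Bool) :
    (ups N f : ℤ) = ∑ i : Fin N, if f i = true then (1:ℤ) else 0 := by
  unfold ups
  rw [Finset.card_filter]
  push_cast
  exact Finset.sum_congr rfl fun i _ => by split <;> simp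

lemma ups_eq_sum (N : ℕ) (f : Fin N → Bool) :
    ups N f = ∑ i : Fin N, if f i = true then 1 else 0 :=
  Finset.card_filter _ _

lemma height_last (N : ℕ) (f : Fin N → Bool) :
    height N f N = 2 * (ups N f : ℤ) - N := by
  rw [height_eq_sum, ups_cast]
  have hN : (N:ℤ) = ∑ _i : Fin N, (1:ℤ) := by simp
  rw [hN, Finset.mul_sum, ← Finset.sum_sub_distrib]
  refine Finset.sum_congr rfl fun i _ => ?_
  rw [if_pos i.isLt]
  split <;> ring

lemma height_succ (N : ℕ) (f : Fin N → Bool) (j : ℕ) (hj : j < N) :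
    height N f (j+1) = height N f j + (if f ⟨j, hj⟩ = true then 1 else -1) := by
  rw [height_eq_sum, height_eq_sum]
  have key : ∀ i : Fin N,
      (if i.1 < j+1 then (if f i = true then (1:ℤ) else -1) else 0)
        = (if i.1 < j then (if f i = true then (1:ℤ) else -1) else 0)
          + (if i = ⟨j, hj⟩ then (if f i = true then (1:ℤ) else -1) else 0) := by
    intro i
    have hiff : (i = ⟨j, hj⟩) = (i.1 = j) := by simp [Fin.ext_iff]
    simp only [hiff]
    by_cases h : i.1 = j
    · simp [h]
    · by_cases h2 : i.1 < j
      · simp [h, h2, show i.1 < j + 1 from by omega]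
      · simp [h, h2, show ¬ i.1 < j + 1 from by omega]
  rw [Finset.sum_congr rfl fun i _ => key i, Finset.sum_add_distrib,
    Finset.sum_ite_eq' Finset.univ (⟨j, hj⟩ : Fin N)]
  simp

lemma height_zero (N : ℕ) (f : Fin N → Bool) : height N f 0 = 0 := by
  simp [height]

lemma ups_succ (M : ℕ) (h : Fin (M+1) → Bool) :
    ups (M+1) h = ups M (Fin.init h) + (if h (Fin.last M) = true then 1 else 0) := by
  rw [ups_eq_sum, ups_eq_sum, Fin.sum_univ_castSucc]
  rfl

lemma height_init (M : ℕ) (h : Fin (M+1) → Bool) (j : ℕ) (hj : j ≤ M) :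
    height (M+1) h j = height M (Fin.init h) j := by
  rw [height_eq_sum, height_eq_sum, Fin.sum_univ_castSucc]
  rw [if_neg (show ¬ (Fin.last M).1 < j by simp only [Fin.val_last]; omega)]
  rw [add_zero]
  rfl

lemma height_prefix (p q : ℕ) (f : Fin (p+q) → Bool) (j : ℕ) (hj : j ≤ p) :
    height (p+q) f j = height p (fun i => f (Fin.castAdd q i)) j := by
  rw [height_eq_sum, height_eq_sum, Fin.sum_univ_add]
  have h2 : ∀ i : Fin q,
      (if (Fin.natAdd p i).1 < j then (if f (Fin.natAdd p i) = true then (1:ℤ) else -1) else 0)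
        = 0 := by
    intro i
    rw [if_neg]
    simp only [Fin.coe_natAdd]
    omega
  rw [Finset.sum_congr rfl fun i _ => h2 i, Finset.sum_const_zero, add_zero]
  rfl

lemma height_suffix (p q : ℕ) (f : Fin (p+q) → Bool) (j : ℕ) :
    height (p+q) f (p + j) = height (p+q) f p + height q (fun i => f (Fin.natAdd p i)) j := by
  rw [height_eq_sum, height_eq_sum, height_eq_sum, Fin.sum_univ_add, Fin.sum_univ_add]
  have e1 : ∀ i : Fin p,
      (if (Fin.castAdd q i).1 < p + j then (if f (Fin.castAdd q i) = true then (1:ℤ) else -1) else 0)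
        = (if (Fin.castAdd q i).1 < p then (if f (Fin.castAdd q i) = true then (1:ℤ) else -1) else 0) := by
    intro i
    have hi := i.isLt
    rw [if_pos (show (Fin.castAdd q i).1 < p + j by simp only [Fin.coe_castAdd]; omega),
      if_pos (show (Fin.castAdd q i).1 < p by simp only [Fin.coe_castAdd]; omega)]
  have e2 : ∀ i : Fin q,
      (if (Fin.natAdd p i).1 < p then (if f (Fin.natAdd p i) = true then (1:ℤ) else -1) else 0) = 0 := by
    intro i
    rw [if_neg (show ¬ (Fin.natAdd p i).1 < p by simp only [Fin.coe_natAdd]; omega)]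
  have e3 : ∀ i : Fin q,
      (if (Fin.natAdd p i).1 < p + j then (if f (Fin.natAdd p i) = true then (1:ℤ) else -1) else 0)
        = (if i.1 < j then (if f (Fin.natAdd p i) = true then (1:ℤ) else -1) else 0) := by
    intro i
    by_cases hij : i.1 < j
    · rw [if_pos (show (Fin.natAdd p i).1 < p + j by simp only [Fin.coe_natAdd]; omega),
        if_pos hij]
    · rw [if_neg (show ¬ (Fin.natAdd p i).1 < p + j by simp only [Fin.coe_natAdd]; omega),
        if_neg hij]
  rw [Finset.sum_congr rfl fun i _ => e1 i, Finset.sum_congr rfl fun i _ => e2 i,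
    Finset.sum_congr rfl fun i _ => e3 i, Finset.sum_const_zero, add_zero]

lemma ups_add (p q : ℕ) (f : Fin (p+q) → Bool) :
    ups (p+q) f = ups p (fun i => f (Fin.castAdd q i)) + ups q (fun i => f (Fin.natAdd p i)) := by
  rw [ups_eq_sum, ups_eq_sum, ups_eq_sum, Fin.sum_univ_add]

/-- auxiliary predicate: a path that avoids level 0 at all times `1..M`. -/
def ok (M a : ℕ) (h : Fin M → Bool) : Prop :=
  ups M h = a ∧ ∀ j, 0 < j → j ≤ M → height M h j ≠ 0

lemma card_ups_eq (N r : ℕ) :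
    Nat.card {f : Fin N → Bool // ups N f = r} = N.choose r := by
  have e : {f : Fin N → Bool // ups N f = r} ≃ {s : Finset (Fin N) // s.card = r} :=
    { toFun := fun f => ⟨Finset.univ.filter fun i => f.1 i = true, f.2⟩
      invFun := fun s => ⟨fun i => decide (i ∈ s.1), by
        unfold ups
        have hfe : (Finset.univ.filter fun i : Fin N => decide (i ∈ s.1) = true) = s.1 := by
          ext i; simp
        rw [hfe, s.2]⟩
      left_inv := fun f => by
        apply Subtype.ext
        funext i
        simp
      right_inv := fun s => by
        apply Subtype.ext
        ext i
        simp }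
  rw [Nat.card_congr e, Nat.card_eq_fintype_card, Fintype.card_finset_len, Fintype.card_fin]

lemma ok_succ (M a b : ℕ) (hab : a + b = M + 1) (hba : b < a) (h : Fin (M+1) → Bool) :
    ok (M+1) a h ↔
      ((h (Fin.last M) = true ∧ ok M (a-1) (Fin.init h)) ∨
       (h (Fin.last M) = false ∧ ok M a (Fin.init h))) := by
  have hups := ups_succ M h
  constructor
  · rintro ⟨hu, hne⟩
    by_cases hl : h (Fin.last M) = true
    · left
      refine ⟨hl, ?_, fun j hj1 hj2 => ?_⟩
      · rw [hl] at hups; simp at hups; omega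
      · rw [← height_init M h j hj2]
        exact hne j hj1 (by omega)
    · right
      have hl' : h (Fin.last M) = false := by
        cases hf : h (Fin.last M) <;> simp_all
      refine ⟨hl', ?_, fun j hj1 hj2 => ?_⟩
      · rw [hl'] at hups; simp at hups; omega
      · rw [← height_init M h j hj2]
        exact hne j hj1 (by omega)
  · rintro (⟨hl, hu', hne'⟩ | ⟨hl, hu', hne'⟩) <;>
    · rw [hl] at hups
      simp at hups
      have hu : ups (M+1) h = a := by omega
      refine ⟨hu, fun j hj1 hj2 => ?_⟩
      rcases Nat.lt_or_ge j (M+1) with hj | hj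
      · rw [height_init M h j (by omega)]
        exact hne' j hj1 (by omega)
      · have hjM : j = M + 1 := by omega
        subst hjM
        rw [height_last, hu]
        push_cast
        omega

lemma ballot_count :
    ∀ M a b : ℕ, a + b = M → b ≤ a → 1 ≤ M →
    (Nat.card {h : Fin M → Bool // ok M a h} : ℤ)
      = (M-1).choose b - (M-1).choose a := by
  intro M
  induction M using Nat.strong_induction_on with
  | _ M ih =>
    intro a b hab hba hM
    rcases eq_or_lt_of_le hba with rfl | hlt
    · -- a = b : empty
      have hempty : IsEmpty {h : Fin M → Bool // ok M b h} := by
        refine ⟨fun x => ?_⟩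
        obtain ⟨h, hu, hne⟩ := x
        refine hne M hM le_rfl ?_
        rw [height_last, hu]
        omega
      rw [Nat.card_of_isEmpty]
      simp
    · rcases Nat.eq_zero_or_pos b with rfl | hb1
      · -- b = 0, a = M : unique all-true path
        have haM : a = M := by omega
        subst haM
        have htrue : ∀ (h : Fin a → Bool), ups a h = a → ∀ i, h i = true := by
          intro h hu i
          have huniv : (Finset.univ.filter fun i : Fin a => h i = true) = Finset.univ := by
            apply Finset.eq_univ_of_card
            rw [Fintype.card_fin]
            exact hu
          have := Finset.eq_univ_iff_forall.mp huniv i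
          simpa using this
        have hheight : ∀ (h : Fin a → Bool), (∀ i, h i = true) →
            ∀ j, j ≤ a → height a h j = j := by
          intro h hh j
          induction j with
          | zero => intro _; simp [height_zero]
          | succ j ihj =>
            intro hja
            rw [height_succ a h j (by omega), ihj (by omega), hh, if_pos rfl]
            push_cast
            ring
        have hok : ok a a (fun _ => true) := by
          refine ⟨?_, fun j hj1 hj2 => ?_⟩
          · unfold ups; simp
          · rw [hheight _ (fun _ => rfl) j hj2]
            exact_mod_cast hj1.ne'
        have hsub : Subsingleton {h : Fin a → Bool // ok a a h} := by
          constructor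
          rintro ⟨h1, hok1⟩ ⟨h2, hok2⟩
          apply Subtype.ext
          funext i
          exact (htrue h1 hok1.1 i).trans (htrue h2 hok2.1 i).symm
        have hne : Nonempty {h : Fin a → Bool // ok a a h} := ⟨⟨_, hok⟩⟩
        rw [Nat.card_eq_one_iff_unique.mpr ⟨hsub, hne⟩]
        rw [Nat.choose_zero_right, Nat.choose_eq_zero_of_lt (by omega)]
        simp
      · -- 1 ≤ b < a : recursion
        obtain ⟨M', rfl⟩ : ∃ M', M = M' + 1 := ⟨M - 1, by omega⟩
        have e : {h : Fin (M'+1) → Bool // ok (M'+1) a h} ≃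
            ({h : Fin M' → Bool // ok M' (a-1) h} ⊕ {h : Fin M' → Bool // ok M' a h}) :=
          { toFun := fun x =>
              if hl : x.1 (Fin.last M') = true then
                Sum.inl ⟨Fin.init x.1,
                  (((ok_succ M' a b hab hlt x.1).mp x.2).resolve_right
                    (fun hc => by rw [hl] at hc; exact absurd hc.1 (by simp))).2⟩
              else
                Sum.inr ⟨Fin.init x.1,
                  (((ok_succ M' a b hab hlt x.1).mp x.2).resolve_left
                    (fun hc => hl hc.1)).2⟩
            invFun := fun y =>
              match y with
              | .inl z => ⟨Fin.snoc z.1 true,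
                  (ok_succ M' a b hab hlt _).mpr (Or.inl ⟨Fin.snoc_last _ _, by
                    rw [Fin.init_snoc]; exact z.2⟩)⟩
              | .inr z => ⟨Fin.snoc z.1 false,
                  (ok_succ M' a b hab hlt _).mpr (Or.inr ⟨Fin.snoc_last _ _, by
                    rw [Fin.init_snoc]; exact z.2⟩)⟩
            left_inv := fun x => by
              by_cases hl : x.1 (Fin.last M') = true
              · simp only [dif_pos hl]
                apply Subtype.ext
                show Fin.snoc (Fin.init x.1) true = x.1
                rw [← hl]
                exact Fin.snoc_init_self x.1
              · simp only [dif_neg hl]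
                have hl' : x.1 (Fin.last M') = false := by
                  cases hf : x.1 (Fin.last M') <;> simp_all
                apply Subtype.ext
                show Fin.snoc (Fin.init x.1) false = x.1
                rw [← hl']
                exact Fin.snoc_init_self x.1
            right_inv := fun y => by
              rcases y with z | z
              · have hl : (Fin.snoc z.1 true : Fin (M'+1) → Bool) (Fin.last M') = true :=
                  Fin.snoc_last _ _
                dsimp only
                rw [dif_pos hl]
                apply congrArg Sum.inl
                apply Subtype.ext
                simp
              · have hl : (Fin.snoc z.1 false : Fin (M'+1) → Bool) (Fin.last M') = false :=
                  Fin.snoc_last _ _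
                dsimp only
                rw [dif_neg (by rw [hl]; simp)]
                apply congrArg Sum.inr
                apply Subtype.ext
                simp }
        rw [Nat.card_congr e, Nat.card_sum]
        push_cast
        rw [ih M' (by omega) (a-1) b (by omega) (by omega) (by omega),
          ih M' (by omega) a (b-1) (by omega) (by omega) (by omega)]
        obtain ⟨A, rfl⟩ : ∃ A, a = A + 1 := ⟨a - 1, by omega⟩
        obtain ⟨B, rfl⟩ : ∃ B, b = B + 1 := ⟨b - 1, by omega⟩
        have hM' : M' = A + B + 1 := by omega
        subst hM'
        simp only [Nat.add_sub_cancel]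
        have p1 : (A+B+1).choose (B+1) = (A+B).choose B + (A+B).choose (B+1) :=
          Nat.choose_succ_succ _ _
        have p2 : (A+B+1).choose (A+1) = (A+B).choose A + (A+B).choose (A+1) :=
          Nat.choose_succ_succ _ _
        rw [p1, p2]
        push_cast
        ring

lemma prop_iff (p M a : ℕ) (f : Fin (2*p+M) → Bool) :
    (ups (2*p+M) f = p + a ∧ height (2*p+M) f (2*p) = 0 ∧
      ∀ j, 2*p < j → j ≤ 2*p + M → height (2*p+M) f j ≠ 0)
    ↔ (ups (2*p) (fun i => f (Fin.castAdd M i)) = p ∧ ok M a (fun i => f (Fin.natAdd (2*p) i))) := by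
  have key1 : height (2*p+M) f (2*p) = height (2*p) (fun i => f (Fin.castAdd M i)) (2*p) :=
    height_prefix _ _ _ _ le_rfl
  have hiff1 : height (2*p+M) f (2*p) = 0 ↔ ups (2*p) (fun i => f (Fin.castAdd M i)) = p := by
    rw [key1, height_last]
    constructor <;> intro hh <;> [omega; (rw [hh]; push_cast; ring)]
  have hups := ups_add (2*p) M f
  constructor
  · rintro ⟨hu, h0, ht⟩
    have hg : ups (2*p) (fun i => f (Fin.castAdd M i)) = p := hiff1.mp h0
    refine ⟨hg, ?_, fun j hj1 hj2 => ?_⟩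
    · omega
    · have := ht (2*p + j) (by omega) (by omega)
      rw [height_suffix, h0, zero_add] at this
      exact this
  · rintro ⟨hg, hh, hht⟩
    have h0 : height (2*p+M) f (2*p) = 0 := hiff1.mpr hg
    refine ⟨by omega, h0, fun j hj1 hj2 => ?_⟩
    obtain ⟨j', rfl⟩ : ∃ j', j = 2*p + j' := ⟨j - 2*p, by omega⟩
    rw [height_suffix, h0, zero_add]
    exact hht j' (by omega) (by omega)

lemma split_count (p M a : ℕ) :
    Nat.card {f : Fin (2*p + M) → Bool // ups (2*p+M) f = p + a ∧ height (2*p+M) f (2*p) = 0 ∧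
        ∀ j, 2*p < j → j ≤ 2*p + M → height (2*p+M) f j ≠ 0}
    = (2*p).choose p * Nat.card {h : Fin M → Bool // ok M a h} := by
  have e : {f : Fin (2*p + M) → Bool // ups (2*p+M) f = p + a ∧ height (2*p+M) f (2*p) = 0 ∧
        ∀ j, 2*p < j → j ≤ 2*p + M → height (2*p+M) f j ≠ 0}
      ≃ {g : Fin (2*p) → Bool // ups (2*p) g = p} × {h : Fin M → Bool // ok M a h} := by
    refine (Equiv.subtypeEquiv ((Equiv.arrowCongr finSumFinEquiv.symm (Equiv.refl Bool)).trans
      (Equiv.sumArrowEquivProdArrow _ _ _)) fun f => ?_).trans (Equiv.subtypeProdEquivProd)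
    have hfst : (((Equiv.arrowCongr finSumFinEquiv.symm (Equiv.refl Bool)).trans
        (Equiv.sumArrowEquivProdArrow _ _ _)) f).1 = fun i => f (Fin.castAdd M i) := by
      funext i
      simp [Equiv.sumArrowEquivProdArrow, Equiv.arrowCongr]
    have hsnd : (((Equiv.arrowCongr finSumFinEquiv.symm (Equiv.refl Bool)).trans
        (Equiv.sumArrowEquivProdArrow _ _ _)) f).2 = fun i => f (Fin.natAdd (2*p) i) := by
      funext i
      simp [Equiv.sumArrowEquivProdArrow, Equiv.arrowCongr]
    rw [hfst, hsnd]
    exact prop_iff p M a f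
  rw [Nat.card_congr e, Nat.card_prod, card_ups_eq]

lemma key_id (a b : ℕ) (hba : b < a) :
    ((a:ℝ) + b) * (((a+b-1).choose b : ℝ) - ((a+b-1).choose a : ℝ))
      = ((a:ℝ) - b) * ((a+b).choose b : ℝ) := by
  obtain ⟨A, rfl⟩ : ∃ A, a = A + 1 := ⟨a - 1, by omega⟩
  rcases Nat.eq_zero_or_pos b with rfl | hb
  · have h1 : A + 1 + 0 - 1 = A := by omega
    rw [h1]
    rw [Nat.choose_zero_right, Nat.choose_eq_zero_of_lt (by omega), Nat.choose_zero_right]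
    push_cast
    ring
  · obtain ⟨B, rfl⟩ : ∃ B, b = B + 1 := ⟨b - 1, by omega⟩
    have h1 : A + 1 + (B + 1) - 1 = A + B + 1 := by omega
    rw [h1]
    have f1 : (A+B+1+1) * (A+B+1).choose A = (A+B+1+1).choose (A+1) * (A+1) :=
      Nat.add_one_mul_choose_eq (A+B+1) A
    have f2 : (A+B+1+1) * (A+B+1).choose B = (A+B+1+1).choose (B+1) * (B+1) :=
      Nat.add_one_mul_choose_eq (A+B+1) B
    have s1 : (A+B+1).choose (B+1) = (A+B+1).choose A := by
      have := Nat.choose_symm (n := A+B+1) (k := A) (by omega)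
      rwa [show A+B+1-A = B+1 by omega] at this
    have s2 : (A+B+1).choose (A+1) = (A+B+1).choose B := by
      have := Nat.choose_symm (n := A+B+1) (k := B) (by omega)
      rwa [show A+B+1-B = A+1 by omega] at this
    have s3 : (A+B+1+1).choose (A+1) = (A+B+1+1).choose (B+1) := by
      have := Nat.choose_symm (n := A+B+1+1) (k := B+1) (by omega)
      rwa [show A+B+1+1-(B+1) = A+1 by omega] at this
    rw [s1, s2]
    have e1 : ((A:ℝ)+B+1+1) * ((A+B+1).choose A : ℝ)
        = ((A+B+1+1).choose (A+1) : ℝ) * ((A:ℝ)+1) := by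
      exact_mod_cast f1
    have e2 : ((A:ℝ)+B+1+1) * ((A+B+1).choose B : ℝ)
        = ((A+B+1+1).choose (B+1) : ℝ) * ((B:ℝ)+1) := by
      exact_mod_cast f2
    rw [s3] at e1
    have hc : (A + 1 + (B+1)).choose (B+1) = (A+B+1+1).choose (B+1) := by
      rw [show A + 1 + (B+1) = A+B+1+1 from by omega]
    rw [hc]
    push_cast
    linear_combination e1 - e2

/-- For a uniformly random lattice path with `m` up-steps and `n` down-steps (`m > n`),
the probability that the last visit to level `0` occurs after exactly `2k` steps equals
`((m-n)/(m+n-2k)) * (2k).choose k * (m+n-2k).choose (n-k) / (m+n).choose n`. -/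
theorem last_exit_time_distribution (n m k : ℕ) (hmn : n < m) (hk : k ≤ n) :
    (Nat.card {f : Fin (m + n) → Bool //
        ups (m + n) f = m ∧ height (m + n) f (2 * k) = 0 ∧
        ∀ j, 2 * k < j → j ≤ m + n → height (m + n) f j ≠ 0} : ℝ)
      / Nat.choose (m + n) n
    = ((m : ℝ) - n) / ((m : ℝ) + n - 2 * k) * Nat.choose (2 * k) k
        * Nat.choose (m + n - 2 * k) (n - k) / Nat.choose (m + n) n := by
  obtain ⟨a, rfl⟩ : ∃ a, m = k + a := ⟨m - k, by omega⟩
  obtain ⟨b, rfl⟩ : ∃ b, n = k + b := ⟨n - k, by omega⟩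
  have hba : b < a := by omega
  have hN : (k + a) + (k + b) = 2*k + (a + b) := by ring
  rw [hN]
  rw [show 2*k + (a+b) - 2*k = a + b by omega]
  rw [show k + b - k = b by omega]
  rw [split_count k (a+b) a]
  have hB := ballot_count (a+b) a b rfl (le_of_lt hba) (by omega)
  have hBR : ((Nat.card {h : Fin (a+b) → Bool // ok (a+b) a h} : ℝ))
      = ((a+b-1).choose b : ℝ) - ((a+b-1).choose a : ℝ) := by
    exact_mod_cast hB
  have hD : ((2*k + (a+b)).choose (k+b) : ℝ) ≠ 0 :=
    Nat.cast_ne_zero.mpr (Nat.choose_pos (by omega)).ne'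
  have hab0 : (a:ℝ) + b ≠ 0 := by
    have ha : (0:ℝ) < a := by exact_mod_cast Nat.pos_of_ne_zero (by omega)
    have hb : (0:ℝ) ≤ b := by positivity
    positivity
  have hkey := key_id a b hba
  rw [div_eq_div_iff hD hD]
  push_cast
  rw [hBR]
  have hden0 : ((k:ℝ) + ↑a + (↑k + ↑b) - 2 * ↑k) ≠ 0 := by
    have hintro : ((k:ℝ) + ↑a + (↑k + ↑b) - 2 * ↑k) = ↑a + ↑b := by ring
    rw [hintro]; exact hab0
  rw [div_mul_eq_mul_div, div_mul_eq_mul_div, div_mul_eq_mul_div, eq_div_iff hden0]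
  linear_combination (((2*k).choose k : ℝ) * (((2*k+(a+b)).choose (k+b) : ℕ) : ℝ)) * hkey
end

section
/- Let 0 ≤ m−n ≤ c·√n for some constant c > 0, and consider a uniformly random lattice path with m up-steps and n down-steps. Then for every 1 ≤ k ≤ min(n/2, nm/(5(m−n)²)), the probability that the first return to level 0 occurs after exactly 2k steps is at least C/(k·√k) for some absolute constant C > 0 (independent of n, m, k). -/
/-!
A path that starts with an up-step, then follows a Dyck word of semilength `k - 1`, then takes a
down-step, first returns to `0` at time `2k`, whatever its remaining `m + n - 2k` steps are.
Hence at least `catalan (k - 1) * C(m + n - 2k, n - k)` paths do so. Removing one up- and one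
down-step changes the binomial coefficient by a factor at least `(1 - 1/(5k)) / 4` as long as
`5k (m - n)² ≤ nm`, so by Bernoulli `4^k C(m + n - 2k, n - k) ≥ (4/5) C(m + n, n)`.
Together with `catalan (k - 1) ≥ 4^(k - 1) / (2k√k)` this gives the bound with `C = 1/10`.
-/

open Finset

theorem Nat.succ_mul_succ_mul_choose_add_two (a b : ℕ) :
    (a + 1) * (b + 1) * (a + b + 2).choose (a + 1) =
      (a + b + 1) * (a + b + 2) * (a + b).choose a := by
  have h := Nat.choose_mul_factorial_mul_factorial (n := a + b + 2) (k := a + 1) (by omega)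
  have h' := Nat.choose_mul_factorial_mul_factorial (Nat.le_add_right a b)
  rw [show a + b + 2 - (a + 1) = b + 1 by omega] at h
  rw [Nat.add_sub_cancel_left] at h'
  refine Nat.eq_of_mul_eq_mul_right (Nat.mul_pos a.factorial_pos b.factorial_pos) ?_
  calc _ = (a + b + 2).choose (a + 1) * (a + 1).factorial * (b + 1).factorial := by
          simp only [Nat.factorial_succ]; ring
    _ = (a + b + 2).factorial := h
    _ = _ := by rw [Nat.factorial_succ, Nat.factorial_succ, ← h']; ring

theorem one_sub_mul_choose_add_two_le {a b : ℕ} {x : ℝ} (hx : x ≤ 1)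
    (hab : ((b : ℝ) - a) ^ 2 ≤ x * (a + b + 2) ^ 2) :
    (1 - x) * (a + b + 2).choose (a + 1) ≤ 4 * (a + b).choose a := by
  have hid : ((a + 1) * (b + 1) * (a + b + 2).choose (a + 1) : ℝ) =
      (a + b + 1) * (a + b + 2) * (a + b).choose a := by
    exact_mod_cast Nat.succ_mul_succ_mul_choose_add_two a b
  have hpos : (0 : ℝ) < (a + 1) * (b + 1) := by positivity
  refine le_of_mul_le_mul_left ?_ hpos
  -- with `s = a + b + 2`: `(1 - x)(s - 1)s ≤ s² - x s² ≤ s² - (b - a)² = 4(a + 1)(b + 1)`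
  have hs : (1 - x) * ((a + b + 1) * (a + b + 2)) ≤ 4 * ((a + 1) * (b + 1)) := by
    nlinarith
  calc (a + 1) * (b + 1) * ((1 - x) * (a + b + 2).choose (a + 1) : ℝ)
      = (1 - x) * ((a + b + 1) * (a + b + 2)) * (a + b).choose a := by
        linear_combination (1 - x) * hid
    _ ≤ 4 * ((a + 1) * (b + 1)) * (a + b).choose a := by gcongr
    _ = _ := by ring

theorem one_sub_pow_mul_choose_le {m n k : ℕ} {x : ℝ} (hnm : n ≤ m) (hk : 2 * k ≤ n)
    (hx : x ≤ 1) (hd : ((m : ℝ) - n) ^ 2 ≤ x * m ^ 2) :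
    (1 - x) ^ k * (m + n).choose n ≤ 4 ^ k * (m + n - 2 * k).choose (n - k) := by
  induction k with
  | zero => simp
  | succ k ih =>
    obtain ⟨a, ha⟩ : ∃ a, n = a + k + 1 := ⟨n - k - 1, by omega⟩
    obtain ⟨b, hb⟩ : ∃ b, m = b + k + 1 := ⟨m - k - 1, by omega⟩
    have hab : ((b : ℝ) - a) ^ 2 ≤ x * (a + b + 2) ^ 2 := by
      have hm : (m : ℝ) ≤ a + b + 2 := by exact_mod_cast (by omega : m ≤ a + b + 2)
      calc ((b : ℝ) - a) ^ 2 = ((m : ℝ) - n) ^ 2 := by rw [ha, hb]; push_cast; ring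
        _ ≤ x * m ^ 2 := hd
        _ ≤ x * (a + b + 2) ^ 2 := by
          have hx0 : 0 ≤ x := nonneg_of_mul_nonneg_left ((sq_nonneg _).trans hd)
            (pow_pos (by exact_mod_cast (by omega : 0 < m)) 2)
          gcongr
    have hstep := one_sub_mul_choose_add_two_le hx hab
    rw [show m + n - 2 * k = a + b + 2 by omega, show n - k = a + 1 by omega] at ih
    rw [show m + n - 2 * (k + 1) = a + b by omega, show n - (k + 1) = a by omega]
    calc (1 - x) ^ (k + 1) * (m + n).choose n
        = (1 - x) * ((1 - x) ^ k * (m + n).choose n) := by ring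
      _ ≤ (1 - x) * (4 ^ k * (a + b + 2).choose (a + 1)) := by
          exact mul_le_mul_of_nonneg_left (ih (by omega)) (by linarith)
      _ = 4 ^ k * ((1 - x) * (a + b + 2).choose (a + 1)) := by ring
      _ ≤ 4 ^ k * (4 * (a + b).choose a) := by gcongr
      _ = _ := by ring

theorem four_div_five_mul_choose_le {m n k : ℕ} (hnm : n ≤ m) (hk1 : 1 ≤ k) (hk : 2 * k ≤ n)
    (h5 : 5 * (k : ℝ) * ((m : ℝ) - n) ^ 2 ≤ n * m) :
    4 / 5 * ((m + n).choose n : ℝ) ≤ 4 ^ k * (m + n - 2 * k).choose (n - k) := by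
  have hk1' : (1 : ℝ) ≤ k := by exact_mod_cast hk1
  set x : ℝ := 1 / (5 * k) with hx
  have hx1 : x ≤ 1 := by
    rw [hx, div_le_one (by positivity)]
    linarith
  have hd : ((m : ℝ) - n) ^ 2 ≤ x * m ^ 2 := by
    rw [hx, div_mul_eq_mul_div, le_div_iff₀ (by positivity)]
    have : (n : ℝ) * m ≤ m ^ 2 := by rw [sq]; gcongr
    linarith
  have hbern : (4 / 5 : ℝ) ≤ (1 - x) ^ k := by
    have hb := one_add_mul_le_pow (a := -x) (by linarith) k
    have hkx : (k : ℝ) * x = 1 / 5 := by rw [hx]; field_simp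
    rw [← sub_eq_add_neg] at hb
    linarith
  calc 4 / 5 * ((m + n).choose n : ℝ) ≤ (1 - x) ^ k * (m + n).choose n := by gcongr
    _ ≤ _ := one_sub_pow_mul_choose_le hnm hk hx1 hd

theorem Nat.sixteen_pow_le_four_mul_mul_centralBinom_sq {j : ℕ} (hj : 0 < j) :
    16 ^ j ≤ 4 * j * j.centralBinom ^ 2 := by
  induction j, hj using Nat.le_induction with
  | base => decide
  | succ j hj ih =>
    have hrec := Nat.succ_mul_centralBinom_succ j
    refine Nat.le_of_mul_le_mul_right (c := (j + 1) ^ 2) ?_ (by positivity)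
    calc 16 ^ (j + 1) * (j + 1) ^ 2 = 16 * 16 ^ j * (j + 1) ^ 2 := by ring
      _ ≤ 16 * (4 * j * j.centralBinom ^ 2) * (j + 1) ^ 2 := by gcongr
      _ ≤ 4 * (j + 1) * (2 * (2 * j + 1) * j.centralBinom) ^ 2 := by
        -- `4 j (j + 1) ≤ (2 j + 1) ^ 2`
        nlinarith [Nat.zero_le (j.centralBinom ^ 2 * (j + 1))]
      _ = 4 * (j + 1) * (j + 1).centralBinom ^ 2 * (j + 1) ^ 2 := by rw [← hrec]; ring

theorem four_pow_le_mul_sqrt_mul_catalan (j : ℕ) :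
    (4 : ℝ) ^ j ≤ 2 * (j + 1) * √(j + 1) * catalan j := by
  have hsq : (4 ^ j) ^ 2 ≤ (2 * (j + 1) * catalan j) ^ 2 * (j + 1) := by
    rcases j.eq_zero_or_pos with rfl | hj
    · simp
    calc (4 ^ j) ^ 2 = 16 ^ j := by rw [← pow_mul, mul_comm, pow_mul]; norm_num
      _ ≤ 4 * j * j.centralBinom ^ 2 := Nat.sixteen_pow_le_four_mul_mul_centralBinom_sq hj
      _ ≤ 4 * (j + 1) * j.centralBinom ^ 2 := by gcongr; omega
      _ = (2 * (j + 1) * catalan j) ^ 2 * (j + 1) := by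
        rw [← succ_mul_catalan_eq_centralBinom]; ring
  have hsqR : ((4 : ℝ) ^ j) ^ 2 ≤ (2 * (j + 1) * catalan j) ^ 2 * (j + 1) := by
    exact_mod_cast hsq
  calc (4 : ℝ) ^ j = √(((4 : ℝ) ^ j) ^ 2) := by rw [Real.sqrt_sq (by positivity)]
    _ ≤ √((2 * (j + 1) * catalan j) ^ 2 * (j + 1)) := Real.sqrt_le_sqrt hsqR
    _ = 2 * (j + 1) * √(j + 1) * catalan j := by
      rw [Real.sqrt_mul (by positivity), Real.sqrt_sq (by positivity)]; ring

theorem List.card_filter_lt_and_eq_count_take_ofFn {α : Type*} [DecidableEq α] {N : ℕ}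
    (f : Fin N → α) (a : α) (j : ℕ) :
    #{i : Fin N | (i : ℕ) < j ∧ f i = a} = ((List.ofFn f).take j).count a := by
  induction N generalizing j with
  | zero => simp
  | succ N ih =>
    cases j with
    | zero => simp
    | succ j =>
      rw [List.ofFn_succ, List.take_succ_cons, List.count_cons, ← ih, Finset.card_filter,
        Finset.card_filter, Fin.sum_univ_succ]
      simp [add_comm]

theorem List.card_filter_eq_count_ofFn {α : Type*} [DecidableEq α] {N : ℕ}
    (f : Fin N → α) (a : α) : #{i : Fin N | f i = a} = (List.ofFn f).count a := by
  rw [← List.take_length (l := List.ofFn f), List.length_ofFn,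
    ← card_filter_lt_and_eq_count_take_ofFn]
  simp

theorem List.ofFn_getD {α : Type*} {L : List α} {N : ℕ} (hL : L.length = N) (d : α) :
    List.ofFn (fun i : Fin N => L.getD i d) = L := by
  subst hL
  simp [List.ofFn_getElem]

theorem height_getD {N : ℕ} {L : List Bool} (hL : L.length = N) (j : ℕ) :
    height N (fun i => L.getD i false) j = (L.take j).count true - (L.take j).count false := by
  simp only [height, List.card_filter_lt_and_eq_count_take_ofFn, List.ofFn_getD hL]

theorem ups_getD {N : ℕ} {L : List Bool} (hL : L.length = N) :
    ups N (fun i => L.getD i false) = L.count true := by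
  rw [ups, List.card_filter_eq_count_ofFn, List.ofFn_getD hL]

namespace DyckStep

def toBool : DyckStep → Bool
  | U => true
  | D => false

theorem toBool_injective : Function.Injective toBool := by
  rintro (_ | _) (_ | _) h <;> first | rfl | cases h

@[simp] theorem count_true_map_toBool (l : List DyckStep) :
    (l.map toBool).count true = l.count U :=
  l.count_map_of_injective toBool toBool_injective U

@[simp] theorem count_false_map_toBool (l : List DyckStep) :
    (l.map toBool).count false = l.count D :=
  l.count_map_of_injective toBool toBool_injective D

end DyckStep

open DyckStep

theorem DyckWord.length_toList_nest (w : DyckWord) :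
    w.nest.toList.length = 2 * (w.semilength + 1) := by
  rw [← DyckWord.two_mul_semilength_eq_length, DyckWord.semilength_nest]

def firstReturnPath {R : ℕ} (w : DyckWord) (S : Finset (Fin R)) : List Bool :=
  w.nest.toList.map toBool ++ List.ofFn fun i => decide (i ∈ S)

section firstReturnPath

variable {R : ℕ} (w : DyckWord) (S : Finset (Fin R))

theorem length_firstReturnPath : (firstReturnPath w S).length = 2 * (w.semilength + 1) + R := by
  simp [firstReturnPath, w.length_toList_nest]

theorem count_true_firstReturnPath :
    (firstReturnPath w S).count true = w.semilength + 1 + #S := by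
  simp only [firstReturnPath, List.count_append, count_true_map_toBool,
    ← List.card_filter_eq_count_ofFn, decide_eq_true_eq, subset_univ, filter_mem_eq_of_subset,
    Nat.add_right_cancel_iff]
  exact w.semilength_nest

theorem take_firstReturnPath {j : ℕ} (hj : j ≤ 2 * (w.semilength + 1)) :
    (firstReturnPath w S).take j = (w.nest.toList.take j).map toBool := by
  rw [firstReturnPath, List.take_append_of_le_length (by simpa [w.length_toList_nest] using hj),
    List.map_take]

theorem eq_and_eq_of_firstReturnPath_eq {w' : DyckWord} {S' : Finset (Fin R)}
    (hw : w.semilength = w'.semilength) (h : firstReturnPath w S = firstReturnPath w' S') :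
    w = w' ∧ S = S' := by
  obtain ⟨hnest, hind⟩ := List.append_inj h (by simp [DyckWord.length_toList_nest, hw])
  refine ⟨?_, ?_⟩
  · have h' : [U] ++ w.toList ++ [D] = [U] ++ w'.toList ++ [D] :=
      List.map_injective_iff.mpr toBool_injective hnest
    exact DyckWord.ext (List.append_cancel_left (List.append_cancel_right h'))
  · ext i
    simpa using congrFun (List.ofFn_injective hind) i

theorem firstReturnPath_getD_spec {N : ℕ}
    (hN : (firstReturnPath w S).length = N) :
    let f := fun i : Fin N => (firstReturnPath w S).getD i false
    ups N f = w.semilength + 1 + #S ∧ height N f (2 * (w.semilength + 1)) = 0 ∧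
      ∀ j, 0 < j → j < 2 * (w.semilength + 1) → height N f j ≠ 0 := by
  have hheight : ∀ j ≤ 2 * (w.semilength + 1),
      height N (fun i => (firstReturnPath w S).getD i false) j =
        (w.nest.toList.take j).count U - (w.nest.toList.take j).count D := by
    intro j hj
    rw [height_getD hN, take_firstReturnPath w S hj, count_true_map_toBool,
      count_false_map_toBool]
  refine ⟨by rw [ups_getD hN, count_true_firstReturnPath], ?_, fun j hj0 hj => ?_⟩
  · rw [hheight _ le_rfl, ← w.length_toList_nest, List.take_length, w.nest.count_U_eq_count_D,
      sub_self]
  · rw [hheight j hj.le, sub_ne_zero]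
    have := DyckWord.IsNested.nest.2 hj0 (by rwa [w.length_toList_nest])
    omega

end firstReturnPath

theorem catalan_mul_choose_le_card {m n k : ℕ} (hk : 1 ≤ k) (hkn : k ≤ n) (hkm : k ≤ m) :
    catalan (k - 1) * (m + n - 2 * k).choose (n - k) ≤
      Nat.card {f : Fin (m + n) → Bool //
        ups (m + n) f = m ∧ height (m + n) f (2 * k) = 0 ∧
        ∀ j, 0 < j → j < 2 * k → height (m + n) f j ≠ 0} := by
  obtain ⟨s, rfl⟩ : ∃ s, k = s + 1 := ⟨k - 1, by omega⟩
  set R := m + n - 2 * (s + 1)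
  have hlen : ∀ (w : {w : DyckWord // w.semilength = s}) (S : Finset (Fin R)),
      (firstReturnPath w.1 S).length = m + n := by
    intro w S
    rw [length_firstReturnPath, w.2]
    omega
  let Φ : {w : DyckWord // w.semilength = s} × {S : Finset (Fin R) // #S = m - (s + 1)} →
      {f : Fin (m + n) → Bool // ups (m + n) f = m ∧ height (m + n) f (2 * (s + 1)) = 0 ∧
        ∀ j, 0 < j → j < 2 * (s + 1) → height (m + n) f j ≠ 0} := fun p =>
    ⟨fun i => (firstReturnPath p.1.1 p.2.1).getD i false, by
      obtain ⟨hups, hret, hpos⟩ := firstReturnPath_getD_spec p.1.1 p.2.1 (hlen p.1 p.2.1)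
      rw [p.1.2] at hups hret hpos
      rw [p.2.2] at hups
      exact ⟨by omega, hret, hpos⟩⟩
  have hΦ : Function.Injective Φ := by
    rintro ⟨w, S⟩ ⟨w', S'⟩ h
    have hL := congrArg List.ofFn (congrArg Subtype.val h)
    simp only [Φ, List.ofFn_getD (hlen _ _)] at hL
    obtain ⟨hw, hS⟩ := eq_and_eq_of_firstReturnPath_eq w.1 S.1 (w.2.trans w'.2.symm) hL
    rw [Subtype.ext hw, Subtype.ext hS]
  calc catalan (s + 1 - 1) * R.choose (n - (s + 1))
      = Nat.card ({w : DyckWord // w.semilength = s} ×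
          {S : Finset (Fin R) // #S = m - (s + 1)}) := by
        rw [Nat.card_prod, Nat.card_eq_fintype_card, Nat.card_eq_fintype_card,
          DyckWord.card_dyckWord_semilength_eq_catalan, Fintype.card_finset_len, Fintype.card_fin,
          Nat.choose_symm_of_eq_add (show R = (n - (s + 1)) + (m - (s + 1)) by omega)]
        rfl
    _ ≤ _ := Nat.card_le_card_of_injective Φ hΦ

theorem first_return_time_lower_bound_general (c : ℝ) :
    ∃ C : ℝ, 0 < C ∧ ∀ n m k : ℕ, n ≤ m →
      ((m : ℝ) - n) ≤ c * Real.sqrt n →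
      1 ≤ k → 2 * k ≤ n →
      5 * (k : ℝ) * ((m : ℝ) - n) ^ 2 ≤ (n : ℝ) * m →
      C / ((k : ℝ) * Real.sqrt k) ≤
        (Nat.card {f : Fin (m + n) → Bool //
            ups (m + n) f = m ∧ height (m + n) f (2 * k) = 0 ∧
            ∀ j, 0 < j → j < 2 * k → height (m + n) f j ≠ 0} : ℝ)
          / Nat.choose (m + n) n := by
  refine ⟨1 / 10, by norm_num, fun n m k hnm _ hk hkn h5 => ?_⟩
  have hcount := catalan_mul_choose_le_card (m := m) (n := n) hk (by omega) (by omega)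
  have hratio := four_div_five_mul_choose_le hnm hk hkn h5
  generalize Nat.card _ = T at hcount ⊢
  obtain ⟨j, rfl⟩ : ∃ j, k = j + 1 := ⟨k - 1, by omega⟩
  have hcat := four_pow_le_mul_sqrt_mul_catalan j
  have hcountR : (catalan j * (m + n - 2 * (j + 1)).choose (n - (j + 1)) : ℝ) ≤ T := by
    exact_mod_cast hcount
  rw [div_le_div_iff₀ (by positivity) (by exact_mod_cast Nat.choose_pos (by omega))]
  push_cast
  calc 1 / 10 * ((m + n).choose n : ℝ)
      ≤ 4 ^ j / 2 * (m + n - 2 * (j + 1)).choose (n - (j + 1)) := by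
        rw [pow_succ] at hratio; linarith
    _ ≤ (j + 1) * √(j + 1) * catalan j * (m + n - 2 * (j + 1)).choose (n - (j + 1)) := by
        gcongr; linarith
    _ = catalan j * (m + n - 2 * (j + 1)).choose (n - (j + 1)) * ((j + 1) * √(j + 1)) := by
        ring
    _ ≤ T * ((j + 1) * √(j + 1)) := by gcongr

/-- If `0 ≤ m - n ≤ c√n`, then for a uniformly random lattice path with `m` up-steps and `n`
down-steps and every `1 ≤ k ≤ min(n/2, nm/(5(m-n)²))`, the probability that the first
return to level `0` occurs after exactly `2k` steps is at least `C/(k√k)` for some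
constant `C > 0` independent of `n`, `m`, `k`. -/
theorem first_return_time_lower_bound (c : ℝ) (hc : 0 < c) :
    ∃ C : ℝ, 0 < C ∧ ∀ n m k : ℕ, n ≤ m →
      ((m : ℝ) - n) ≤ c * Real.sqrt n →
      1 ≤ k → 2 * k ≤ n →
      5 * (k : ℝ) * ((m : ℝ) - n) ^ 2 ≤ (n : ℝ) * m →
      C / ((k : ℝ) * Real.sqrt k) ≤
        (Nat.card {f : Fin (m + n) → Bool //
            ups (m + n) f = m ∧ height (m + n) f (2 * k) = 0 ∧
            ∀ j, 0 < j → j < 2 * k → height (m + n) f j ≠ 0} : ℝ)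
          / Nat.choose (m + n) n :=
  first_return_time_lower_bound_general c
end

section
/- For integers n ≥ 1 and i with n/3 ≤ i ≤ 2n/3, consider a uniformly random lattice path with n up-steps and n down-steps; the probability that the height after the step corresponding to the i-th down-step lies in [−4√n, −3√n] is at least a positive constant independent of n (for n large enough), that is, ∑_{k=⌈3√n⌉}^{⌊4√n⌋} C(2i+k, i) · C(2n−2i−k, n−i) / C(2n, n) ≥ α for some α > 0 and all sufficiently large n. -/
open Finset

lemma hockey_range (i M : ℕ) :
    ∑ p ∈ range (M + 1), p.choose i = (M + 1).choose (i + 1) := by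
  rcases le_or_gt i M with h | h
  · rw [← Nat.sum_Icc_choose M i]
    refine (Finset.sum_subset (fun x hx => ?_) (fun x hx hx2 => ?_)).symm
    · simp only [mem_Icc] at hx; simp only [mem_range]; omega
    · simp only [mem_Icc, not_and, not_le] at hx2
      simp only [mem_range] at hx
      exact Nat.choose_eq_zero_of_lt (by omega)
  · rw [Nat.choose_eq_zero_of_lt (by omega)]
    exact Finset.sum_eq_zero fun x hx => Nat.choose_eq_zero_of_lt
      (by simp only [mem_range] at hx; omega)

/-- Dual Vandermonde: sum over the top index. -/
lemma vandermonde_top (i : ℕ) : ∀ (M r : ℕ),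
    ∑ p ∈ range (M + 1), (p.choose i) * ((M - p).choose r) = (M + 1).choose (i + r + 1) := by
  intro M
  induction M with
  | zero =>
    intro r
    cases i with
    | zero =>
      cases r with
      | zero => simp
      | succ r => simp [Nat.choose_eq_zero_of_lt (show (1:ℕ) < 0 + (r+1) + 1 by omega), Nat.choose_eq_zero_of_lt (show (1:ℕ) < r+1+1 by omega)]
    | succ i => simp [Nat.choose_eq_zero_of_lt (by omega : (1:ℕ) < (i+1) + r + 1)]
  | succ M ih =>
    intro r
    cases r with
    | zero =>
      simp only [Nat.choose_zero_right, mul_one]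
      rw [hockey_range]
    | succ r =>
      rw [Finset.sum_range_succ]
      have h1 : ∀ p ∈ range (M+1), p.choose i * ((M + 1 - p).choose (r+1))
          = p.choose i * ((M - p).choose r) + p.choose i * ((M-p).choose (r+1)) := by
        intro p hp
        simp only [mem_range] at hp
        have h2 : M + 1 - p = (M - p) + 1 := by omega
        rw [h2, Nat.choose_succ_succ, Nat.mul_add]
      rw [Finset.sum_congr rfl h1, Finset.sum_add_distrib, ih r, ih (r+1),
        Nat.sub_self, Nat.choose_zero_succ, Nat.mul_zero, Nat.add_zero,
        show i + (r+1) + 1 = (i + r + 1) + 1 from rfl]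
      exact (Nat.choose_succ_succ (M+1) (i+r+1)).symm

def U (n i p : ℕ) : ℕ := (Nat.choose p i) * (Nat.choose (2*n - p) (n - i))

noncomputable def V (n i p : ℕ) : ℝ := (U n i p : ℝ)

lemma V_nonneg (n i p : ℕ) : 0 ≤ V n i p := Nat.cast_nonneg _

lemma U_rec (n i p : ℕ) (hin : i ≤ n) (hp : p < 2*n) :
    (p + 1 - i) * (2*n - p) * U n i (p+1) = (p + 1) * ((n + i) - p) * U n i p := by
  have h1 : p.choose i * (p + 1) = (p+1).choose i * (p + 1 - i) := Nat.choose_mul_succ_eq p i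
  have h2 : (2*n - p - 1).choose (n-i) * (2*n - p) = (2*n - p).choose (n-i) * ((2*n - p) - (n-i)) := by
    have := Nat.choose_mul_succ_eq (2*n - p - 1) (n - i)
    rwa [show 2*n - p - 1 + 1 = 2*n - p by omega] at this
  have h3 : (2*n - p) - (n - i) = (n + i) - p := by omega
  have h4 : 2*n - (p+1) = 2*n - p - 1 := by omega
  rw [h3] at h2
  unfold U
  rw [h4]
  calc (p + 1 - i) * (2*n - p) * ((p+1).choose i * (2*n - p - 1).choose (n-i))
      = ((p+1).choose i * (p + 1 - i)) * ((2*n - p - 1).choose (n-i) * (2*n - p)) := by ring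
    _ = (p.choose i * (p + 1)) * ((2*n - p).choose (n-i) * ((n + i) - p)) := by rw [h1, h2]
    _ = (p + 1) * ((n + i) - p) * (p.choose i * (2*n - p).choose (n-i)) := by ring

lemma V_zero_of_ge (n i p : ℕ) (hi : i < n) (hp : n + i ≤ p) : V n i (p+1) = 0 := by
  unfold V U
  rw [Nat.choose_eq_zero_of_lt (show 2*n - (p+1) < n - i by omega)]
  push_cast; ring

/-- monotone decreasing to the right of `2i` -/
lemma V_step_le (n i p : ℕ) (hi : i < n) (hip : 2*i ≤ p) : V n i (p+1) ≤ V n i p := by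
  rcases le_or_gt (n+i) p with h | h
  · rw [V_zero_of_ge n i p hi h]; exact V_nonneg n i p
  rcases le_or_gt (2*n) p with h2 | h2
  · omega
  have hrec := U_rec n i p (le_of_lt hi) h2
  set A := (p + 1 - i) * (2*n - p) with hA
  set B := (p + 1) * ((n + i) - p) with hB
  have hb : B ≤ A := by
    rw [hA, hB]
    zify [show i ≤ p + 1 by omega, show p ≤ 2*n by omega, show p ≤ n + i by omega]
    nlinarith [hi.le, hip, h.le, h2.le]
  have ha : 0 < A := by rw [hA]; apply Nat.mul_pos <;> omega
  have hrecR : (A : ℝ) * V n i (p+1) = (B : ℝ) * V n i p := by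
    unfold V; exact_mod_cast hrec
  have haR : (0:ℝ) < (A:ℝ) := by exact_mod_cast ha
  have hbR : (B:ℝ) ≤ (A:ℝ) := by exact_mod_cast hb
  have : (A:ℝ) * V n i (p+1) ≤ (A:ℝ) * V n i p := by
    rw [hrecR]
    exact mul_le_mul_of_nonneg_right hbR (V_nonneg n i p)
  exact le_of_mul_le_mul_left this haR

lemma V_antitone (n i : ℕ) (hi : i < n) {p q : ℕ} (hp : 2*i ≤ p) (hpq : p ≤ q) :
    V n i q ≤ V n i p := by
  induction q with
  | zero => simp [show p = 0 by omega] at hp ⊢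
  | succ q ih =>
    rcases Nat.lt_or_ge p (q+1) with h | h
    · exact le_trans (V_step_le n i q hi (by omega)) (ih (by omega))
    · have : p = q + 1 := by omega
      rw [this]

lemma key_geo (i c k s : ℕ) (hkc : k < c) (hsk : s ≤ k) :
    5*(i+c)*((2*i+k+1)*(c-k)) ≤ (5*(i+c)-s)*((i+k+1)*(2*c-k)) := by
  zify [show k ≤ c by omega, show k ≤ 2*c by omega, show s ≤ 5*(i+c) by omega]
  set N : ℤ := (i:ℤ) + c with hN
  have e1 : ((i:ℤ)+k+1)*(2*(c:ℤ)-k) ≤ 2*N*c := by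
    have h1 : ((i:ℤ)+k+1) ≤ N := by omega
    have h2 : (2*(c:ℤ)-k) ≤ 2*c := by omega
    calc ((i:ℤ)+k+1)*(2*(c:ℤ)-k) ≤ N*(2*c) := by
          apply mul_le_mul h1 h2 (by omega) (by omega)
      _ = 2*N*c := by ring
  have e2 : (s:ℤ)*(((i:ℤ)+k+1)*(2*(c:ℤ)-k)) ≤ (k:ℤ)*(2*N*c) := by
    apply mul_le_mul (by exact_mod_cast hsk) e1
      (mul_nonneg (by positivity) (by omega)) (by positivity)
  have iden : 5*N*(((i:ℤ)+k+1)*(2*(c:ℤ)-k)) - 5*N*((2*(i:ℤ)+k+1)*((c:ℤ)-k))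
      = 5*N*((i:ℤ)*k) + 5*N*(((k:ℤ)+1)*c) := by ring
  nlinarith [e2, iden, mul_nonneg (mul_nonneg (by omega : (0:ℤ) ≤ 5*N) (by positivity : (0:ℤ) ≤ (i:ℤ))) (by positivity : (0:ℤ) ≤ (k:ℤ)),
    mul_nonneg (mul_nonneg (by omega : (0:ℤ) ≤ 3*N) (by positivity : (0:ℤ) ≤ (k:ℤ))) (by positivity : (0:ℤ) ≤ (c:ℤ)),
    mul_nonneg (by omega : (0:ℤ) ≤ 5*N) (by positivity : (0:ℤ) ≤ (c:ℤ))]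

lemma key_lo (i c k m : ℕ) (hkm : k < m) (h6m : 6*m ≤ i+c) (hc2i : c ≤ 2*i) (hi2c : i ≤ 2*c) :
    ((i+c) - 6*m)*((i+k+1)*(2*c-k)) ≤ (i+c)*((2*i+k+1)*((c:ℕ)-k)) := by
  have hkc : k < c := by omega
  zify [show k ≤ c by omega, show k ≤ 2*c by omega, show 6*m ≤ i+c by omega]
  set N : ℤ := (i:ℤ) + c with hN
  have f1 : N*N ≤ (3*((i:ℤ)+k+1))*(2*(2*(c:ℤ)-k)) := by
    have h1 : N ≤ 3*((i:ℤ)+k+1) := by omega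
    have h2 : N ≤ 2*(2*(c:ℤ)-k) := by omega
    calc N*N ≤ (3*((i:ℤ)+k+1))*N := by
          apply mul_le_mul_of_nonneg_right h1 (by omega)
      _ ≤ (3*((i:ℤ)+k+1))*(2*(2*(c:ℤ)-k)) := by
          apply mul_le_mul_of_nonneg_left h2 (by omega)
  have f3 : (i:ℤ)*k + ((k:ℤ)+1)*c ≤ ((k:ℤ)+1)*N := by nlinarith [Int.ofNat_nonneg i]
  have iden : (((i:ℤ)+k+1)*(2*(c:ℤ)-k)) - ((2*(i:ℤ)+k+1)*((c:ℤ)-k))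
      = (i:ℤ)*k + ((k:ℤ)+1)*c := by ring
  have f4 : N*((i:ℤ)*k + ((k:ℤ)+1)*c) ≤ N*(((k:ℤ)+1)*N) := by
    apply mul_le_mul_of_nonneg_left f3 (by omega)
  have f5 : N*(((k:ℤ)+1)*N) ≤ (m:ℤ)*(N*N) := by
    have : ((k:ℤ)+1) ≤ m := by omega
    nlinarith [mul_nonneg (show (0:ℤ) ≤ N by omega) (show (0:ℤ) ≤ N by omega)]
  have f6 : (m:ℤ)*(N*N) ≤ (m:ℤ)*((3*((i:ℤ)+k+1))*(2*(2*(c:ℤ)-k))) := by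
    apply mul_le_mul_of_nonneg_left f1 (by positivity)
  nlinarith [f4, f5, f6, iden]

lemma V_rec_real (n i p : ℕ) (hin : i ≤ n) (hp : p < 2*n) :
    ((p + 1 - i) * (2*n - p) : ℕ) * V n i (p+1)
      = (((p + 1) * ((n + i) - p) : ℕ) : ℝ) * V n i p := by
  unfold V; exact_mod_cast U_rec n i p hin hp

lemma V_step_geo (n i s k : ℕ) (hi : i < n) (hs5 : s ≤ n) (hsk : s ≤ k) :
    V n i (2*i + k + 1) ≤ (1 - (s:ℝ)/(5*n)) * V n i (2*i + k) := by
  have hn : 0 < n := by omega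
  have hnR : (0:ℝ) < (n:ℝ) := by exact_mod_cast hn
  have h5n : (0:ℝ) < 5*(n:ℝ) := by positivity
  have hsR : (s:ℝ) ≤ (n:ℝ) := by exact_mod_cast hs5
  have hrho : 0 ≤ 1 - (s:ℝ)/(5*n) := by
    rw [sub_nonneg, div_le_one h5n]; linarith
  set p := 2*i + k with hp
  rcases le_or_gt (n+i) p with h | h
  · rw [V_zero_of_ge n i p hi h]
    exact mul_nonneg hrho (V_nonneg _ _ _)
  have h2 : p < 2*n := by omega
  have hrec := V_rec_real n i p hi.le h2
  obtain ⟨c, hc⟩ : ∃ c, n = i + c := ⟨n - i, by omega⟩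
  have hkc : k < c := by omega
  have key : 5*n*((p + 1) * ((n + i) - p)) ≤ (5*n - s)*((p + 1 - i) * (2*n - p)) := by
    have h0 := key_geo i c k s hkc hsk
    have ha : p + 1 - i = i + k + 1 := by omega
    have hb : 2*n - p = 2*c - k := by omega
    have hcc : (n+i) - p = c - k := by omega
    have hd : p + 1 = 2*i + k + 1 := by omega
    rw [ha, hb, hcc, hd, hc]
    convert h0 using 3 <;> omega
  have ha : 0 < (p + 1 - i) * (2*n - p) := by apply Nat.mul_pos <;> omega
  have haR : (0:ℝ) < (((p + 1 - i) * (2*n - p) : ℕ) : ℝ) := by exact_mod_cast ha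
  have hkeyR : 5*(n:ℝ)*(((p + 1) * ((n + i) - p) : ℕ) : ℝ)
      ≤ (5*(n:ℝ) - s)*(((p + 1 - i) * (2*n - p) : ℕ) : ℝ) := by
    have : ((5*n - s : ℕ) : ℝ) = 5*(n:ℝ) - s := by
      have : s ≤ 5*n := by omega
      push_cast [this]; ring
    calc 5*(n:ℝ)*(((p + 1) * ((n + i) - p) : ℕ) : ℝ)
        = ((5*n*((p + 1) * ((n + i) - p)) : ℕ) : ℝ) := by push_cast; ring
      _ ≤ (((5*n - s)*((p + 1 - i) * (2*n - p)) : ℕ) : ℝ) := by exact_mod_cast key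
      _ = (5*(n:ℝ) - s)*(((p + 1 - i) * (2*n - p) : ℕ) : ℝ) := by rw [Nat.cast_mul, this]
  -- conclude
  have hBr : (((p + 1) * ((n + i) - p) : ℕ) : ℝ)
      ≤ (1 - (s:ℝ)/(5*n)) * (((p + 1 - i) * (2*n - p) : ℕ) : ℝ) := by
    rw [show (1 - (s:ℝ)/(5*n)) * (((p + 1 - i) * (2*n - p) : ℕ) : ℝ)
        = (5*(n:ℝ) - s) * (((p + 1 - i) * (2*n - p) : ℕ) : ℝ) / (5*n) by field_simp]
    rw [le_div_iff₀ h5n]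
    linarith [hkeyR]
  have hfin : (((p + 1 - i) * (2*n - p) : ℕ) : ℝ) * V n i (p+1)
      ≤ (((p + 1 - i) * (2*n - p) : ℕ) : ℝ) * ((1 - (s:ℝ)/(5*n)) * V n i p) := by
    rw [hrec]
    calc (((p + 1) * ((n + i) - p) : ℕ) : ℝ) * V n i p
        ≤ ((1 - (s:ℝ)/(5*n)) * (((p + 1 - i) * (2*n - p) : ℕ) : ℝ)) * V n i p :=
          mul_le_mul_of_nonneg_right hBr (V_nonneg _ _ _)
      _ = (((p + 1 - i) * (2*n - p) : ℕ) : ℝ) * ((1 - (s:ℝ)/(5*n)) * V n i p) := by ring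
  exact le_of_mul_le_mul_left hfin haR

lemma V_step_lo (n i k m : ℕ) (h1 : n ≤ 3*i) (h2 : 3*i ≤ 2*n) (h6m : 6*m ≤ n) (hkm : k < m) :
    (1 - 6*(m:ℝ)/n) * V n i (2*i + k) ≤ V n i (2*i + k + 1) := by
  have hn : 0 < n := by omega
  have hnR : (0:ℝ) < (n:ℝ) := by exact_mod_cast hn
  have hi : i < n := by omega
  obtain ⟨c, hc⟩ : ∃ c, n = i + c := ⟨n - i, by omega⟩
  have hkc : k < c := by omega
  set p := 2*i + k with hp
  have h : p < n + i := by omega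
  have h2n : p < 2*n := by omega
  have hrec := V_rec_real n i p hi.le h2n
  have key : (n - 6*m)*((p + 1 - i) * (2*n - p)) ≤ n*((p + 1) * ((n + i) - p)) := by
    have h0 := key_lo i c k m hkm (by omega) (by omega) (by omega)
    have ha : p + 1 - i = i + k + 1 := by omega
    have hb : 2*n - p = 2*c - k := by omega
    have hcc : (n+i) - p = c - k := by omega
    have hd : p + 1 = 2*i + k + 1 := by omega
    rw [ha, hb, hcc, hd]
    convert h0 using 3 <;> omega
  have ha : 0 < (p + 1 - i) * (2*n - p) := by apply Nat.mul_pos <;> omega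
  have haR : (0:ℝ) < (((p + 1 - i) * (2*n - p) : ℕ) : ℝ) := by exact_mod_cast ha
  have hkeyR : ((n:ℝ) - 6*m)*(((p + 1 - i) * (2*n - p) : ℕ) : ℝ)
      ≤ (n:ℝ)*(((p + 1) * ((n + i) - p) : ℕ) : ℝ) := by
    have hnm : ((n - 6*m : ℕ) : ℝ) = (n:ℝ) - 6*m := by
      push_cast [h6m]; ring
    calc ((n:ℝ) - 6*m)*(((p + 1 - i) * (2*n - p) : ℕ) : ℝ)
        = (((n - 6*m)*((p + 1 - i) * (2*n - p)) : ℕ) : ℝ) := by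
          push_cast [h6m, show i ≤ p+1 by omega, show p ≤ 2*n by omega]; ring
      _ ≤ ((n*((p + 1) * ((n + i) - p)) : ℕ) : ℝ) := by exact_mod_cast key
      _ = (n:ℝ)*(((p + 1) * ((n + i) - p) : ℕ) : ℝ) := by push_cast; ring
  have hBr : (1 - 6*(m:ℝ)/n) * (((p + 1 - i) * (2*n - p) : ℕ) : ℝ)
      ≤ (((p + 1) * ((n + i) - p) : ℕ) : ℝ) := by
    rw [show (1 - 6*(m:ℝ)/n) * (((p + 1 - i) * (2*n - p) : ℕ) : ℝ)
        = ((n:ℝ) - 6*m) * (((p + 1 - i) * (2*n - p) : ℕ) : ℝ) / n by field_simp]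
    rw [div_le_iff₀ hnR]
    nlinarith [hkeyR]
  have hfin : (((p + 1 - i) * (2*n - p) : ℕ) : ℝ) * ((1 - 6*(m:ℝ)/n) * V n i p)
      ≤ (((p + 1 - i) * (2*n - p) : ℕ) : ℝ) * V n i (p+1) := by
    rw [hrec]
    calc (((p + 1 - i) * (2*n - p) : ℕ) : ℝ) * ((1 - 6*(m:ℝ)/n) * V n i p)
        = ((1 - 6*(m:ℝ)/n) * (((p + 1 - i) * (2*n - p) : ℕ) : ℝ)) * V n i p := by ring
      _ ≤ (((p + 1) * ((n + i) - p) : ℕ) : ℝ) * V n i p :=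
          mul_le_mul_of_nonneg_right hBr (V_nonneg _ _ _)
  exact le_of_mul_le_mul_left hfin haR

lemma total_ge (n i : ℕ) (h : i ≤ n) :
    ((2*n).choose n : ℝ) ≤ ∑ p ∈ range (2*n+1), V n i p := by
  have hv := vandermonde_top i (2*n) (n - i)
  have : ∑ p ∈ range (2*n+1), U n i p = (2*n+1).choose (n+1) := by
    unfold U
    rw [hv, show i + (n-i) + 1 = n + 1 by omega]
  have h2 : ((2*n).choose n : ℕ) ≤ ∑ p ∈ range (2*n+1), U n i p := by
    rw [this, show 2*n+1 = (2*n)+1 from rfl, Nat.choose_succ_succ (2*n) n]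
    omega
  calc ((2*n).choose n : ℝ) ≤ ((∑ p ∈ range (2*n+1), U n i p : ℕ) : ℝ) := by exact_mod_cast h2
    _ = ∑ p ∈ range (2*n+1), V n i p := by unfold V; push_cast; rfl

lemma geom_chain (n i s : ℕ) (hi : i < n) (hs5 : s ≤ n) :
    ∀ j, V n i (2*i+s+j) ≤ (1 - (s:ℝ)/(5*n))^j * V n i (2*i+s) := by
  have hn : 0 < n := by omega
  have hrho : 0 ≤ 1 - (s:ℝ)/(5*n) := by
    rw [sub_nonneg, div_le_one (by positivity)]
    have : (s:ℝ) ≤ (n:ℝ) := by exact_mod_cast hs5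
    linarith
  intro j
  induction j with
  | zero => simp
  | succ j ih =>
    have step := V_step_geo n i s (s+j) hi hs5 (by omega)
    rw [show 2*i+(s+j) = 2*i+s+j by ring] at step
    rw [show 2*i+s+(j+1) = 2*i+s+j+1 by ring]
    calc V n i (2*i+s+j+1) ≤ (1 - (s:ℝ)/(5*n)) * V n i (2*i+s+j) := step
      _ ≤ (1 - (s:ℝ)/(5*n)) * ((1 - (s:ℝ)/(5*n))^j * V n i (2*i+s)) :=
          mul_le_mul_of_nonneg_left ih hrho
      _ = (1 - (s:ℝ)/(5*n))^(j+1) * V n i (2*i+s) := by ring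

lemma myGeomLe (x : ℝ) (h0 : 0 ≤ x) (h1 : x < 1) (N : ℕ) :
    ∑ j ∈ range N, x^j ≤ 1/(1-x) := by
  have hx : (0:ℝ) < 1 - x := by linarith
  rw [geom_sum_eq (by linarith : x ≠ 1)]
  have he : (x^N - 1)/(x-1) = (1 - x^N)/(1-x) := by
    rw [← neg_div_neg_eq]; ring_nf
  rw [he, div_le_div_iff₀ hx hx]
  nlinarith [pow_nonneg h0 N]

lemma onesided (n i s : ℕ) (h1 : n ≤ 3*i) (h2 : 3*i ≤ 2*n) (hn : 1 ≤ n)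
    (hs1 : 1 ≤ s) (hsn : 2*s ≤ n) :
    ∑ p ∈ Ico (2*i) (2*n+1), V n i p ≤ ((s:ℝ) + 5*n/s) * V n i (2*i) := by
  have hi : i < n := by omega
  have ht : 2*i + s ≤ 2*n + 1 := by omega
  have hii : 2*i ≤ 2*i + s := by omega
  have hsplit := Finset.sum_Ico_consecutive (fun p => V n i p) hii ht
  have hρ0 : 0 ≤ 1 - (s:ℝ)/(5*n) := by
    rw [sub_nonneg, div_le_one (by positivity)]
    have : (s:ℝ) ≤ (n:ℝ) := by exact_mod_cast (show s ≤ n by omega)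
    linarith
  have hρlt : 1 - (s:ℝ)/(5*n) < 1 := by
    have hs : (0:ℝ) < (s:ℝ) := by exact_mod_cast hs1
    have : (0:ℝ) < (s:ℝ)/(5*n) := by positivity
    linarith
  have hsR : (0:ℝ) < (s:ℝ) := by exact_mod_cast hs1
  have hnR : (0:ℝ) < (n:ℝ) := by exact_mod_cast hn
  -- head
  have hhead : ∑ p ∈ Ico (2*i) (2*i+s), V n i p ≤ (s:ℝ) * V n i (2*i) := by
    have := Finset.sum_le_card_nsmul (Ico (2*i) (2*i+s)) (fun p => V n i p) (V n i (2*i))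
      (fun p hp => by
        simp only [mem_Ico] at hp
        exact V_antitone n i hi (le_refl _) hp.1)
    rw [Nat.card_Ico] at this
    calc ∑ p ∈ Ico (2*i) (2*i+s), V n i p ≤ (2*i+s-2*i) • V n i (2*i) := this
      _ = (s:ℝ) * V n i (2*i) := by
          rw [show 2*i+s-2*i = s by omega, nsmul_eq_mul]
  -- tail
  have htail : ∑ p ∈ Ico (2*i+s) (2*n+1), V n i p ≤ (5*(n:ℝ)/s) * V n i (2*i) := by
    rw [Finset.sum_Ico_eq_sum_range]
    have hVs : V n i (2*i+s) ≤ V n i (2*i) := V_antitone n i hi (le_refl _) (by omega)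
    have hbound : ∀ j ∈ range (2*n+1-(2*i+s)), V n i (2*i+s+j)
        ≤ (1 - (s:ℝ)/(5*n))^j * V n i (2*i) := by
      intro j _
      calc V n i (2*i+s+j) ≤ (1 - (s:ℝ)/(5*n))^j * V n i (2*i+s) :=
            geom_chain n i s hi (by omega) j
        _ ≤ (1 - (s:ℝ)/(5*n))^j * V n i (2*i) :=
            mul_le_mul_of_nonneg_left hVs (pow_nonneg hρ0 j)
    calc ∑ j ∈ range (2*n+1-(2*i+s)), V n i (2*i+s+j)
        ≤ ∑ j ∈ range (2*n+1-(2*i+s)), (1 - (s:ℝ)/(5*n))^j * V n i (2*i) :=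
          Finset.sum_le_sum hbound
      _ = (∑ j ∈ range (2*n+1-(2*i+s)), (1 - (s:ℝ)/(5*n))^j) * V n i (2*i) := by
          rw [Finset.sum_mul]
      _ ≤ (5*(n:ℝ)/s) * V n i (2*i) := by
          apply mul_le_mul_of_nonneg_right _ (V_nonneg _ _ _)
          have hgeom := myGeomLe (1 - (s:ℝ)/(5*n)) hρ0 hρlt (2*n+1-(2*i+s))
          rw [show 1 - (1 - (s:ℝ)/(5*n)) = (s:ℝ)/(5*n) by ring, one_div_div] at hgeom
          exact hgeom
  calc ∑ p ∈ Ico (2*i) (2*n+1), V n i p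
      = ∑ p ∈ Ico (2*i) (2*i+s), V n i p + ∑ p ∈ Ico (2*i+s) (2*n+1), V n i p := hsplit.symm
    _ ≤ (s:ℝ) * V n i (2*i) + (5*(n:ℝ)/s) * V n i (2*i) := add_le_add hhead htail
    _ = ((s:ℝ) + 5*n/s) * V n i (2*i) := by ring

lemma V_reflect (n i p : ℕ) (hi : i ≤ n) (hp : p ≤ 2*n) : V n i p = V n (n-i) (2*n - p) := by
  unfold V U
  rw [show 2*n - (2*n - p) = p by omega, show n - (n-i) = i by omega]
  push_cast; ring

lemma reflect_sum (n i : ℕ) (hi : i ≤ n) (hin : 2*i ≤ 2*n) :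
    ∑ p ∈ Ico 0 (2*i), V n i p ≤ ∑ p ∈ Ico (2*(n-i)) (2*n+1), V n (n-i) p := by
  have key : ∑ p ∈ Ico 0 (2*i), V n i p = ∑ p ∈ Ico (2*n-2*i+1) (2*n+1), V n (n-i) p := by
    apply Finset.sum_nbij' (i := fun p => 2*n - p) (j := fun p => 2*n - p)
    · intro a ha; simp only [mem_Ico] at ha ⊢; omega
    · intro a ha; simp only [mem_Ico] at ha ⊢; omega
    · intro a ha; simp only [mem_Ico] at ha; omega
    · intro a ha; simp only [mem_Ico] at ha; omega
    · intro a ha; simp only [mem_Ico] at ha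
      exact V_reflect n i a hi (by omega)
  rw [key]
  apply Finset.sum_le_sum_of_subset_of_nonneg
  · intro x hx; simp only [mem_Ico] at hx ⊢; omega
  · intro x _ _; exact V_nonneg _ _ _

lemma center_eq (n i : ℕ) (hi : i ≤ n) : V n (n-i) (2*(n-i)) = V n i (2*i) := by
  rw [V_reflect n i (2*i) hi (by omega), show 2*n - 2*i = 2*(n-i) by omega]

lemma center_lb (n i s : ℕ) (h1 : n ≤ 3*i) (h2 : 3*i ≤ 2*n) (hn : 1 ≤ n)
    (hs1 : 1 ≤ s) (hsn : 2*s ≤ n) :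
    ((2*n).choose n : ℝ) ≤ 2*((s:ℝ) + 5*n/s) * V n i (2*i) := by
  have hi : i ≤ n := by omega
  have hsplit := Finset.sum_Ico_consecutive (fun p => V n i p)
    (show 0 ≤ 2*i by omega) (show 2*i ≤ 2*n+1 by omega)
  have htot := total_ge n i hi
  rw [range_eq_Ico] at htot
  have hup := onesided n i s h1 h2 hn hs1 hsn
  have hlow : ∑ p ∈ Ico 0 (2*i), V n i p ≤ ((s:ℝ) + 5*n/s) * V n i (2*i) := by
    calc ∑ p ∈ Ico 0 (2*i), V n i p ≤ ∑ p ∈ Ico (2*(n-i)) (2*n+1), V n (n-i) p :=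
          reflect_sum n i hi (by omega)
      _ ≤ ((s:ℝ) + 5*n/s) * V n (n-i) (2*(n-i)) :=
          onesided n (n-i) s (by omega) (by omega) hn hs1 hsn
      _ = ((s:ℝ) + 5*n/s) * V n i (2*i) := by rw [center_eq n i hi]
  calc ((2*n).choose n : ℝ) ≤ ∑ p ∈ Ico 0 (2*n+1), V n i p := htot
    _ = ∑ p ∈ Ico 0 (2*i), V n i p + ∑ p ∈ Ico (2*i) (2*n+1), V n i p := hsplit.symm
    _ ≤ ((s:ℝ) + 5*n/s) * V n i (2*i) + ((s:ℝ) + 5*n/s) * V n i (2*i) := add_le_add hlow hup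
    _ = 2*((s:ℝ) + 5*n/s) * V n i (2*i) := by ring

lemma one_sub_ge_exp {x : ℝ} (h0 : 0 ≤ x) (h1 : x ≤ 1/2) : Real.exp (-(2*x)) ≤ 1 - x := by
  have h := Real.add_one_le_exp (2*x)
  have hpos : (0:ℝ) < 1 + 2*x := by linarith
  have hexp : (0:ℝ) < Real.exp (2*x) := Real.exp_pos _
  have h2 : Real.exp (-(2*x)) = 1 / Real.exp (2*x) := by
    rw [Real.exp_neg]; ring
  rw [h2]
  have h3 : 1 / Real.exp (2*x) ≤ 1 / (1 + 2*x) := by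
    apply one_div_le_one_div_of_le hpos (by linarith)
  have h4 : 1 / (1 + 2*x) ≤ 1 - x := by
    rw [div_le_iff₀ hpos]
    nlinarith
  linarith

lemma V_window_lb (n i m : ℕ) (h1 : n ≤ 3*i) (h2 : 3*i ≤ 2*n) (hn : 0 < n) (h12m : 12*m ≤ n)
    (hm2 : ((m:ℝ))^2 ≤ 16*n) :
    Real.exp (-200) * V n i (2*i) ≤ V n i (2*i + m) := by
  have hnR : (0:ℝ) < (n:ℝ) := by exact_mod_cast hn
  set x : ℝ := 6*(m:ℝ)/n with hx
  have hx0 : 0 ≤ x := by positivity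
  have hx12 : x ≤ 1/2 := by
    rw [hx, div_le_iff₀ hnR]
    have : (12*m : ℝ) ≤ (n:ℝ) := by exact_mod_cast h12m
    linarith
  have hexpr : Real.exp (-(2*x)) ≤ 1 - x := one_sub_ge_exp hx0 hx12
  have chain : ∀ j, j ≤ m → (1-x)^j * V n i (2*i) ≤ V n i (2*i + j) := by
    intro j
    induction j with
    | zero => intro _; simp
    | succ j ih =>
      intro hj
      have step := V_step_lo n i j m h1 h2 (by omega) (by omega)
      calc (1-x)^(j+1) * V n i (2*i)
          = (1-x) * ((1-x)^j * V n i (2*i)) := by ring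
        _ ≤ (1-x) * V n i (2*i + j) :=
            mul_le_mul_of_nonneg_left (ih (by omega)) (by linarith)
        _ ≤ V n i (2*i + j + 1) := step
        _ = V n i (2*i + (j+1)) := by ring_nf
  have hpow : Real.exp (-200) ≤ (1-x)^m := by
    calc Real.exp (-200) ≤ Real.exp (-(2*x)*m) := by
          apply Real.exp_le_exp.2
          have he : (-(2*x))*(m:ℝ) = -(12*(m:ℝ)^2/n) := by rw [hx]; ring
          rw [he, neg_le_neg_iff, div_le_iff₀ hnR]
          nlinarith [hm2]
      _ = Real.exp (-(2*x))^m := by rw [← Real.exp_nat_mul]; ring_nf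
      _ ≤ (1-x)^m := pow_le_pow_left₀ (Real.exp_nonneg _) hexpr m
  calc Real.exp (-200) * V n i (2*i) ≤ (1-x)^m * V n i (2*i) :=
        mul_le_mul_of_nonneg_right hpow (V_nonneg _ _ _)
    _ ≤ V n i (2*i + m) := chain m (le_refl m)

set_option maxHeartbeats 1600000 in
/-- For a uniformly random lattice path with `n` up-steps and `n` down-steps and any
`n/3 ≤ i ≤ 2n/3`, the probability that the `i`-th down-step leaves the walk at a height in
`[-4√n, -3√n]`, namely `∑_{k=⌈3√n⌉}^{⌊4√n⌋} (2i+k).choose i * (2n-2i-k).choose (n-i) / (2n).choose n`,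
is bounded below by a positive constant `α` independent of `i` and `n`, for `n` large enough. -/
theorem middle_rider_height_lower_bound :
    ∃ α : ℝ, 0 < α ∧ ∃ N : ℕ, ∀ n : ℕ, N ≤ n → ∀ i : ℕ, n ≤ 3 * i → 3 * i ≤ 2 * n →
      α ≤ ∑ k ∈ Finset.Icc ⌈3 * Real.sqrt n⌉₊ ⌊4 * Real.sqrt n⌋₊,
        ((Nat.choose (2 * i + k) i : ℝ) * Nat.choose (2 * n - 2 * i - k) (n - i))
          / Nat.choose (2 * n) n := by
  refine ⟨Real.exp (-200)/28, by positivity, 2304, ?_⟩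
  intro n hN i h3i h3i2
  have hn1 : 1 ≤ n := by omega
  have hnR : (0:ℝ) < (n:ℝ) := by exact_mod_cast hn1
  set sq := Real.sqrt n with hsq
  have hsq0 : 0 ≤ sq := Real.sqrt_nonneg _
  have hsq2 : sq^2 = n := Real.sq_sqrt (by positivity)
  have hsq48 : 48 ≤ sq := by
    rw [hsq, show (48:ℝ) = Real.sqrt 2304 by
      rw [show (2304:ℝ) = 48^2 by norm_num, Real.sqrt_sq (by norm_num)]]
    exact Real.sqrt_le_sqrt (by exact_mod_cast hN)
  set a := ⌈3*sq⌉₊ with ha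
  set m := ⌊4*sq⌋₊ with hm
  set s := ⌈sq⌉₊ with hs
  have haR : (a:ℝ) < 3*sq + 1 := Nat.ceil_lt_add_one (by positivity)
  have haR2 : 3*sq ≤ (a:ℝ) := Nat.le_ceil _
  have hmR : (m:ℝ) ≤ 4*sq := Nat.floor_le (by positivity)
  have hmR2 : 4*sq < (m:ℝ) + 1 := Nat.lt_floor_add_one _
  have hsR : sq ≤ (s:ℝ) := Nat.le_ceil _
  have hsR2 : (s:ℝ) < sq + 1 := Nat.ceil_lt_add_one hsq0
  have hi : i < n := by omega
  have hs1 : 1 ≤ s := by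
    have : (1:ℝ) ≤ (s:ℝ) := by linarith
    exact_mod_cast this
  have hsn : 2*s ≤ n := by
    have : ((2*s : ℕ):ℝ) ≤ (n:ℝ) := by push_cast; nlinarith
    exact_mod_cast this
  have h12m : 12*m ≤ n := by
    have : ((12*m : ℕ):ℝ) ≤ (n:ℝ) := by push_cast; nlinarith
    exact_mod_cast this
  have hm2 : ((m:ℝ))^2 ≤ 16*n := by nlinarith [Nat.cast_nonneg (α := ℝ) m]
  have ham : a ≤ m := by
    have : (a:ℝ) < (m:ℝ) + 1 := by nlinarith
    exact_mod_cast Nat.lt_succ_iff.mp (by exact_mod_cast this)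
  set C := ((2*n).choose n : ℝ) with hC
  have hCpos : 0 < C := by
    rw [hC]; exact_mod_cast Nat.choose_pos (by omega)
  -- rewrite the sum
  have hterm : ∀ k ∈ Icc a m,
      ((Nat.choose (2 * i + k) i : ℝ) * Nat.choose (2 * n - 2 * i - k) (n - i)) / C
        = V n i (2*i + k) / C := by
    intro k _
    unfold V U
    rw [show 2*n - 2*i - k = 2*n - (2*i + k) by omega]
    push_cast; ring_nf
  rw [Finset.sum_congr rfl hterm, ← Finset.sum_div]
  rw [le_div_iff₀ hCpos]
  -- lower bound the numerator sum
  have hmin : ∀ k ∈ Icc a m, V n i (2*i + m) ≤ V n i (2*i + k) := by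
    intro k hk
    simp only [mem_Icc] at hk
    exact V_antitone n i hi (by omega) (by omega)
  have hsum1 : ((Icc a m).card : ℝ) * V n i (2*i + m) ≤ ∑ k ∈ Icc a m, V n i (2*i + k) := by
    have := Finset.card_nsmul_le_sum (Icc a m) (fun k => V n i (2*i+k)) (V n i (2*i+m)) hmin
    rwa [nsmul_eq_mul] at this
  have hcard : ((Icc a m).card : ℝ) = (m:ℝ) + 1 - a := by
    rw [Nat.card_Icc]
    push_cast [show a ≤ m + 1 by omega]
    ring
  have hcardlb : sq/2 ≤ ((Icc a m).card : ℝ) := by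
    rw [hcard]; nlinarith
  have hwin := V_window_lb n i m h3i h3i2 (by omega) h12m hm2
  have hcen := center_lb n i s h3i h3i2 hn1 hs1 hsn
  have hV0 : 0 ≤ V n i (2*i) := V_nonneg _ _ _
  have hVm0 : 0 ≤ V n i (2*i+m) := V_nonneg _ _ _
  have hsRpos : (0:ℝ) < (s:ℝ) := by linarith
  have hDle : 2*((s:ℝ) + 5*n/s) ≤ 14*sq := by
    have h5 : 5*(n:ℝ)/s ≤ 5*sq := by
      rw [div_le_iff₀ hsRpos]
      nlinarith
    linarith
  have hDpos : (0:ℝ) < 2*((s:ℝ) + 5*n/s) := by positivity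
  have hVlb : C / (14*sq) ≤ V n i (2*i) := by
    have h1 : C / (2*((s:ℝ) + 5*n/s)) ≤ V n i (2*i) := by
      rw [div_le_iff₀ hDpos]; linarith [hcen]
    have h2 : C / (14*sq) ≤ C / (2*((s:ℝ) + 5*n/s)) := by
      apply div_le_div_of_nonneg_left hCpos.le hDpos hDle
    linarith
  calc Real.exp (-200)/28 * C
      = (sq/2) * (Real.exp (-200) * (C / (14*sq))) := by
        field_simp
        ring
    _ ≤ (sq/2) * (Real.exp (-200) * V n i (2*i)) := by
        apply mul_le_mul_of_nonneg_left _ (by positivity)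
        exact mul_le_mul_of_nonneg_left hVlb (Real.exp_nonneg _)
    _ ≤ (sq/2) * V n i (2*i+m) := mul_le_mul_of_nonneg_left hwin (by positivity)
    _ ≤ ((Icc a m).card : ℝ) * V n i (2*i + m) :=
        mul_le_mul_of_nonneg_right hcardlb hVm0
    _ ≤ ∑ k ∈ Icc a m, V n i (2*i + k) := hsum1
end

section
/- Consider the walk W on [0,ℓ] induced by n riders and m ≥ (1+ε)n drivers placed i.i.d. uniformly on [0,ℓ] (up at drivers, down at riders). Let γ_{-1}:=0 and γ_0 ≤ γ_1 ≤ … ≤ γ_{m−n} be the last exit times from levels 0,…,m−n. Then in each slice [γ_{i−1}, γ_i] for i ≥ 1 the number of drivers exceeds the number of riders by exactly 1, and [0,γ_0] contains equally many riders and drivers; consequently there exists a perfect matching of all riders to drivers in which every matched pair lies within a single slice. -/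
/-- The walk induced by the riders `R` and drivers `D` on the line: it goes up by one at
each driver and down by one at each rider. -/
noncomputable def walk (R D : Finset ℝ) (t : ℝ) : ℤ :=
  ((D.filter fun x => x ≤ t).card : ℤ) - ((R.filter fun x => x ≤ t).card : ℤ)

/-- The `i`-th last exit time of the walk from level `i`, within `[0, ℓ]`. -/
noncomputable def exitT (R D : Finset ℝ) (ℓ : ℝ) (i : ℕ) : ℝ :=
  sSup {t | t ≤ ℓ ∧ walk R D t ≤ (i : ℤ)}

/-- The `i`-th walkSlice (`0 ≤ i ≤ K`, with `K = m - n`) of `[0, ℓ]` determined by the exit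
times: `[0, γ₀)`, `[γ₀, γ₁)`, …, `[γ_{K-1}, ℓ]`. -/
noncomputable def walkSlice (R D : Finset ℝ) (ℓ : ℝ) (K : ℕ) (i : ℕ) : Set ℝ :=
  if i = 0 then Set.Ico 0 (exitT R D ℓ 0)
  else if i = K then Set.Icc (exitT R D ℓ (K - 1)) ℓ
  else Set.Ico (exitT R D ℓ (i - 1)) (exitT R D ℓ i)

/- ### Auxiliary definitions and lemmas -/

open Classical

/-- The left-continuous version of the walk (counting points strictly below `t`). -/
noncomputable def walkL (R D : Finset ℝ) (t : ℝ) : ℤ :=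
  ((D.filter fun x => x < t).card : ℤ) - ((R.filter fun x => x < t).card : ℤ)

lemma filter_le_stable (S : Finset ℝ) (t : ℝ) :
    ∃ δ > 0, ∀ s, t ≤ s → s < t + δ →
      S.filter (fun x => x ≤ s) = S.filter (fun x => x ≤ t) := by
  classical
  by_cases h : (S.filter (fun x => t < x)).Nonempty
  · refine ⟨(S.filter (fun x => t < x)).min' h - t, ?_, fun s hs hs' => ?_⟩
    · have hm := (S.filter (fun x => t < x)).min'_mem h
      rw [Finset.mem_filter] at hm
      linarith [hm.2]
    · ext x
      simp only [Finset.mem_filter]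
      refine and_congr_right fun hx => ⟨fun hxs => ?_, fun hxt => le_trans hxt hs⟩
      by_contra hxt
      push_neg at hxt
      have hxF : x ∈ S.filter (fun x => t < x) := Finset.mem_filter.2 ⟨hx, hxt⟩
      have := (S.filter (fun x => t < x)).min'_le x hxF
      linarith
  · refine ⟨1, one_pos, fun s hs hs' => ?_⟩
    ext x
    simp only [Finset.mem_filter]
    refine and_congr_right fun hx => ⟨fun hxs => ?_, fun hxt => le_trans hxt hs⟩
    by_contra hxt
    push_neg at hxt
    exact h ⟨x, Finset.mem_filter.2 ⟨hx, hxt⟩⟩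

lemma filter_lt_stable (S : Finset ℝ) (t : ℝ) :
    ∃ δ > 0, ∀ s, t - δ < s → s < t →
      S.filter (fun x => x ≤ s) = S.filter (fun x => x < t) := by
  classical
  by_cases h : (S.filter (fun x => x < t)).Nonempty
  · refine ⟨t - (S.filter (fun x => x < t)).max' h, ?_, fun s hs hs' => ?_⟩
    · have hm := (S.filter (fun x => x < t)).max'_mem h
      rw [Finset.mem_filter] at hm
      linarith [hm.2]
    · ext x
      simp only [Finset.mem_filter]
      refine and_congr_right fun hx => ⟨fun hxs => lt_of_le_of_lt hxs hs', fun hxt => ?_⟩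
      have := (S.filter (fun x => x < t)).le_max' x (Finset.mem_filter.2 ⟨hx, hxt⟩)
      linarith
  · refine ⟨1, one_pos, fun s hs hs' => ?_⟩
    ext x
    simp only [Finset.mem_filter]
    refine and_congr_right fun hx => ⟨fun hxs => ?_, fun hxt => ?_⟩
    · exact absurd ⟨x, Finset.mem_filter.2 ⟨hx, lt_of_le_of_lt hxs hs'⟩⟩ h
    · exact absurd ⟨x, Finset.mem_filter.2 ⟨hx, hxt⟩⟩ h

lemma walk_right (R D : Finset ℝ) (t : ℝ) :
    ∃ δ > 0, ∀ s, t ≤ s → s < t + δ → walk R D s = walk R D t := by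
  obtain ⟨δ₁, hδ₁, h₁⟩ := filter_le_stable R t
  obtain ⟨δ₂, hδ₂, h₂⟩ := filter_le_stable D t
  refine ⟨min δ₁ δ₂, lt_min hδ₁ hδ₂, fun s hs hs' => ?_⟩
  unfold walk
  rw [h₁ s hs (by have := min_le_left δ₁ δ₂; linarith),
    h₂ s hs (by have := min_le_right δ₁ δ₂; linarith)]

lemma walk_left (R D : Finset ℝ) (t : ℝ) :
    ∃ δ > 0, ∀ s, t - δ < s → s < t → walk R D s = walkL R D t := by
  obtain ⟨δ₁, hδ₁, h₁⟩ := filter_lt_stable R t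
  obtain ⟨δ₂, hδ₂, h₂⟩ := filter_lt_stable D t
  refine ⟨min δ₁ δ₂, lt_min hδ₁ hδ₂, fun s hs hs' => ?_⟩
  unfold walk walkL
  rw [h₁ s (by have := min_le_left δ₁ δ₂; linarith) hs',
    h₂ s (by have := min_le_right δ₁ δ₂; linarith) hs']

lemma walk_le_walkL_add_one (R D : Finset ℝ) (t : ℝ) :
    walk R D t ≤ walkL R D t + 1 := by
  classical
  have hD : (D.filter fun x => x ≤ t) ⊆ insert t (D.filter fun x => x < t) := by
    intro x hx
    rw [Finset.mem_filter] at hx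
    rcases lt_or_eq_of_le hx.2 with h | h
    · exact Finset.mem_insert_of_mem (Finset.mem_filter.2 ⟨hx.1, h⟩)
    · simp [h]
  have h1 : (D.filter fun x => x ≤ t).card ≤ (D.filter fun x => x < t).card + 1 :=
    le_trans (Finset.card_le_card hD) (Finset.card_insert_le _ _)
  have h2 : (R.filter fun x => x < t).card ≤ (R.filter fun x => x ≤ t).card := by
    apply Finset.card_le_card
    intro x hx
    rw [Finset.mem_filter] at hx ⊢
    exact ⟨hx.1, le_of_lt hx.2⟩
  unfold walk walkL
  omega

lemma card_filter_Ico (S : Finset ℝ) (P : ℝ → Prop) (hdec : DecidablePred P) (a b : ℝ)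
    (hab : a ≤ b) (hP : ∀ x, P x ↔ a ≤ x ∧ x < b) :
    (((@Finset.filter ℝ P hdec S).card : ℤ))
      = ((S.filter fun x => x < b).card : ℤ) - ((S.filter fun x => x < a).card : ℤ) := by
  classical
  have hPico : @Finset.filter ℝ P hdec S = S.filter fun x => x ∈ Set.Ico a b := by
    ext x
    rw [Finset.mem_filter, Finset.mem_filter]
    simp [hP x, Set.mem_Ico]
  rw [hPico]
  have hsub : (S.filter fun x => x < a) ⊆ (S.filter fun x => x < b) := by
    intro x hx
    rw [Finset.mem_filter] at hx ⊢
    exact ⟨hx.1, lt_of_lt_of_le hx.2 hab⟩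
  have hsd : (S.filter fun x => x < b) \ (S.filter fun x => x < a)
      = S.filter fun x => x ∈ Set.Ico a b := by
    ext x
    simp only [Finset.mem_sdiff, Finset.mem_filter, Set.mem_Ico, not_and, not_lt]
    constructor
    · rintro ⟨⟨hxS, hxb⟩, h2⟩; exact ⟨hxS, h2 hxS, hxb⟩
    · rintro ⟨hxS, hax, hxb⟩; exact ⟨⟨hxS, hxb⟩, fun _ => hax⟩
  rw [← hsd, Finset.card_sdiff_of_subset hsub]
  have := Finset.card_le_card hsub
  omega

lemma card_filter_Icc (S : Finset ℝ) (P : ℝ → Prop) (hdec : DecidablePred P) (a ℓ : ℝ)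
    (hlt : ∀ x ∈ S, x < ℓ) (hP : ∀ x, P x ↔ a ≤ x ∧ x ≤ ℓ) :
    (((@Finset.filter ℝ P hdec S).card : ℤ))
      = (S.card : ℤ) - ((S.filter fun x => x < a).card : ℤ) := by
  classical
  have hPicc : @Finset.filter ℝ P hdec S = S.filter fun x => x ∈ Set.Icc a ℓ := by
    ext x
    rw [Finset.mem_filter, Finset.mem_filter]
    simp [hP x, Set.mem_Icc]
  rw [hPicc]
  have h1 : S.filter (fun x => x ∈ Set.Icc a ℓ) = S \ S.filter (fun x => x < a) := by
    ext x
    simp only [Finset.mem_filter, Finset.mem_sdiff, Set.mem_Icc, not_and, not_lt]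
    constructor
    · rintro ⟨hxS, hax, _⟩; exact ⟨hxS, fun _ => hax⟩
    · rintro ⟨hxS, h⟩; exact ⟨hxS, h hxS, le_of_lt (hlt x hxS)⟩
  rw [h1, Finset.card_sdiff_of_subset (Finset.filter_subset _ _)]
  have := Finset.card_le_card (Finset.filter_subset (fun x => x < a) S)
  omega

lemma natCard_inter (S : Finset ℝ) (s : Set ℝ) :
    Nat.card (↑S ∩ s : Set ℝ) = (S.filter fun x => x ∈ s).card := by
  classical
  have h : (↑S ∩ s : Set ℝ) = ↑(S.filter fun x => x ∈ s) := by
    ext x; simp [Finset.mem_filter]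
  rw [h, Nat.card_coe_set_eq, Set.ncard_coe_finset]

lemma exists_pair_matching (A B : Finset ℝ) (h : A.card ≤ B.card) :
    ∃ M : Finset (ℝ × ℝ), (∀ p ∈ M, p.1 ∈ A ∧ p.2 ∈ B) ∧
      (∀ p ∈ M, ∀ q ∈ M, p.1 = q.1 → p = q) ∧
      (∀ p ∈ M, ∀ q ∈ M, p.2 = q.2 → p = q) ∧ M.image Prod.fst = A := by
  classical
  obtain ⟨T, hTB, hTcard⟩ := Finset.exists_subset_card_eq h
  have e : (A : Finset ℝ) ≃ (T : Finset ℝ) := Finset.equivOfCardEq hTcard.symm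
  refine ⟨A.attach.image (fun x : {y // y ∈ A} => ((x : ℝ), ((e x).1 : ℝ))), ?_, ?_, ?_, ?_⟩
  · intro p hp
    simp only [Finset.mem_image, Finset.mem_attach, true_and] at hp
    obtain ⟨x, hx⟩ := hp
    rw [← hx]
    exact ⟨x.2, hTB (e x).2⟩
  · intro p hp q hq hpq
    simp only [Finset.mem_image, Finset.mem_attach, true_and] at hp hq
    obtain ⟨x, hx⟩ := hp
    obtain ⟨y, hy⟩ := hq
    rw [← hx, ← hy]
    rw [← hx, ← hy] at hpq
    have : x = y := Subtype.ext hpq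
    rw [this]
  · intro p hp q hq hpq
    simp only [Finset.mem_image, Finset.mem_attach, true_and] at hp hq
    obtain ⟨x, hx⟩ := hp
    obtain ⟨y, hy⟩ := hq
    rw [← hx, ← hy]
    rw [← hx, ← hy] at hpq
    have : x = y := e.injective (Subtype.ext hpq)
    rw [this]
  · rw [Finset.image_image]
    exact Finset.attach_image_val

/-- With `n` riders and `m ≥ (1+ε)n` drivers at distinct positions in `(0, ℓ)`, the slices
determined by the last exit times satisfy: the first walkSlice `[0, γ₀)` contains equally many
riders and drivers, every walkSlice `[γ_{i-1}, γ_i)` with `i ≥ 1` contains exactly one more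
driver than riders, and consequently there is a perfect matching of all riders to drivers
in which every matched pair lies within a single walkSlice. -/
theorem slices_and_within_slice_matching (n m : ℕ) (ε : ℝ) (hε : 0 < ε)
    (R D : Finset ℝ) (ℓ : ℝ) (hℓ : 0 < ℓ)
    (hR : R.card = n) (hD : D.card = m) (hm : (1 + ε) * n ≤ m)
    (hRsub : ↑R ⊆ Set.Ioo 0 ℓ) (hDsub : ↑D ⊆ Set.Ioo 0 ℓ) (hdisj : Disjoint R D) :
    Nat.card (↑D ∩ walkSlice R D ℓ (m - n) 0 : Set ℝ)
        = Nat.card (↑R ∩ walkSlice R D ℓ (m - n) 0 : Set ℝ) ∧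
    (∀ i, 1 ≤ i → i ≤ m - n →
      Nat.card (↑D ∩ walkSlice R D ℓ (m - n) i : Set ℝ)
        = Nat.card (↑R ∩ walkSlice R D ℓ (m - n) i : Set ℝ) + 1) ∧
    ∃ M : Finset (ℝ × ℝ), IsMatching R D M ∧ M.image Prod.fst = R ∧
      ∀ p ∈ M, ∃ i ≤ m - n, p.1 ∈ walkSlice R D ℓ (m - n) i ∧ p.2 ∈ walkSlice R D ℓ (m - n) i := by
  classical
  have hnm : n ≤ m := by
    have h1 : (n : ℝ) ≤ (1 + ε) * n := by nlinarith [Nat.cast_nonneg (α := ℝ) n]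
    exact_mod_cast h1.trans hm
  set K := m - n with hKdef
  set γ : ℕ → ℝ := exitT R D ℓ with hγdef
  set slice : ℕ → Set ℝ := walkSlice R D ℓ K with hslicedef
  have hRpt : ∀ x ∈ R, 0 < x ∧ x < ℓ := fun x hx =>
    ⟨(hRsub (Finset.mem_coe.2 hx)).1, (hRsub (Finset.mem_coe.2 hx)).2⟩
  have hDpt : ∀ x ∈ D, 0 < x ∧ x < ℓ := fun x hx =>
    ⟨(hDsub (Finset.mem_coe.2 hx)).1, (hDsub (Finset.mem_coe.2 hx)).2⟩
  have hwalk0 : ∀ t : ℝ, t ≤ 0 → walk R D t = 0 := by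
    intro t ht
    unfold walk
    have hDf : D.filter (fun x => x ≤ t) = ∅ :=
      Finset.filter_false_of_mem (fun x hx h => by have := (hDpt x hx).1; linarith)
    have hRf : R.filter (fun x => x ≤ t) = ∅ :=
      Finset.filter_false_of_mem (fun x hx h => by have := (hRpt x hx).1; linarith)
    rw [hDf, hRf]
    simp
  have hwalkℓ : walk R D ℓ = (K : ℤ) := by
    unfold walk
    have hDf : D.filter (fun x => x ≤ ℓ) = D :=
      Finset.filter_true_of_mem (fun x hx => le_of_lt (hDpt x hx).2)
    have hRf : R.filter (fun x => x ≤ ℓ) = R :=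
      Finset.filter_true_of_mem (fun x hx => le_of_lt (hRpt x hx).2)
    rw [hDf, hRf, hR, hD]
    omega
  have hwalkLℓ : walkL R D ℓ = (K : ℤ) := by
    unfold walkL
    have hDf : D.filter (fun x => x < ℓ) = D :=
      Finset.filter_true_of_mem (fun x hx => (hDpt x hx).2)
    have hRf : R.filter (fun x => x < ℓ) = R :=
      Finset.filter_true_of_mem (fun x hx => (hRpt x hx).2)
    rw [hDf, hRf, hR, hD]
    omega
  have hγ_eq : ∀ i : ℕ, γ i = sSup {t | t ≤ ℓ ∧ walk R D t ≤ (i : ℤ)} := fun i => rfl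
  have hmem0 : ∀ i : ℕ, (0 : ℝ) ∈ {t : ℝ | t ≤ ℓ ∧ walk R D t ≤ (i : ℤ)} := by
    intro i
    refine ⟨le_of_lt hℓ, ?_⟩
    rw [hwalk0 0 le_rfl]
    exact_mod_cast Int.ofNat_nonneg i
  have hbdd : ∀ i : ℕ, BddAbove {t : ℝ | t ≤ ℓ ∧ walk R D t ≤ (i : ℤ)} :=
    fun i => ⟨ℓ, fun t ht => ht.1⟩
  have hγle : ∀ i, γ i ≤ ℓ := fun i => csSup_le ⟨0, hmem0 i⟩ (fun t ht => ht.1)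
  have hγ0 : ∀ i, 0 ≤ γ i := fun i => le_csSup (hbdd i) (hmem0 i)
  have hγmono : ∀ i j : ℕ, i ≤ j → γ i ≤ γ j := by
    intro i j hij
    apply csSup_le_csSup (hbdd j) ⟨0, hmem0 i⟩
    intro t ht
    exact ⟨ht.1, le_trans ht.2 (by exact_mod_cast hij)⟩
  have hafter : ∀ (i : ℕ) (t : ℝ), γ i < t → t ≤ ℓ → (i : ℤ) < walk R D t := by
    intro i t hγt htℓ
    by_contra h
    push_neg at h
    exact absurd (le_csSup (hbdd i) ⟨htℓ, h⟩) (not_le.2 hγt)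
  have keyL : ∀ i : ℕ, i ≤ K → walkL R D (γ i) = (i : ℤ) := by
    intro i hiK
    rcases eq_or_lt_of_le hiK with hEq | hiK'
    · have hγℓ : γ i = ℓ := le_antisymm (hγle i)
        (le_csSup (hbdd i) ⟨le_refl ℓ, by rw [hwalkℓ, hEq]⟩)
      rw [hγℓ, hwalkLℓ, hEq]
    · obtain ⟨δ₁, hδ₁, h₁⟩ := walk_left R D ℓ
      have hsup_lt : γ i ≤ ℓ - δ₁ := by
        apply csSup_le ⟨0, hmem0 i⟩
        intro t ht
        by_contra hcon
        push_neg at hcon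
        have hw := ht.2
        rcases lt_or_eq_of_le ht.1 with h2 | h2
        · rw [h₁ t hcon h2, hwalkLℓ] at hw
          have : K ≤ i := by exact_mod_cast hw
          omega
        · rw [h2, hwalkℓ] at hw
          have : K ≤ i := by exact_mod_cast hw
          omega
      have hγltℓ : γ i < ℓ := lt_of_le_of_lt hsup_lt (by linarith)
      obtain ⟨δ₂, hδ₂, h₂⟩ := walk_right R D (γ i)
      have hmin : 0 < min δ₂ (ℓ - γ i) := lt_min hδ₂ (by linarith)
      have hw2 : (i : ℤ) < walk R D (γ i) := by
        have hs1 : γ i < γ i + min δ₂ (ℓ - γ i) / 2 := by linarith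
        have hs2 : γ i + min δ₂ (ℓ - γ i) / 2 < γ i + δ₂ := by
          have := min_le_left δ₂ (ℓ - γ i); linarith
        have hs3 : γ i + min δ₂ (ℓ - γ i) / 2 ≤ ℓ := by
          have := min_le_right δ₂ (ℓ - γ i); linarith
        rw [← h₂ _ (le_of_lt hs1) hs2]
        exact hafter i _ hs1 hs3
      obtain ⟨δ₃, hδ₃, h₃⟩ := walk_left R D (γ i)
      have h3 : walkL R D (γ i) ≤ (i : ℤ) := by
        have hx : γ i - δ₃ < sSup {t : ℝ | t ≤ ℓ ∧ walk R D t ≤ (i : ℤ)} := by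
          rw [← hγ_eq i]; linarith
        obtain ⟨t, htS, ht⟩ := exists_lt_of_lt_csSup ⟨0, hmem0 i⟩ hx
        have htγ : t ≤ γ i := le_csSup (hbdd i) htS
        rcases lt_or_eq_of_le htγ with hlt | heq
        · rw [← h₃ t ht hlt]; exact htS.2
        · exfalso
          rw [heq] at htS
          exact absurd htS.2 (not_le.2 hw2)
      have h4 := walk_le_walkL_add_one R D (γ i)
      omega
  -- filters of negatives are empty
  have hDneg : D.filter (fun x => x < (0 : ℝ)) = ∅ :=
    Finset.filter_false_of_mem (fun x hx h => absurd h (not_lt.2 (le_of_lt (hDpt x hx).1)))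
  have hRneg : R.filter (fun x => x < (0 : ℝ)) = ∅ :=
    Finset.filter_false_of_mem (fun x hx h => absurd h (not_lt.2 (le_of_lt (hRpt x hx).1)))
  -- slice descriptions
  have hslice0 : slice 0 = Set.Ico 0 (γ 0) := by
    rw [hslicedef, hγdef]; simp [walkSlice]
  have hsliceK : K ≠ 0 → slice K = Set.Icc (γ (K - 1)) ℓ := by
    intro h; rw [hslicedef, hγdef]; simp [walkSlice, h]
  have hslicei : ∀ i, i ≠ 0 → i ≠ K → slice i = Set.Ico (γ (i - 1)) (γ i) := by
    intro i h1 h2; rw [hslicedef, hγdef]; simp [walkSlice, h1, h2]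
  -- integer count identities
  have hcount0 : ((D.filter fun x => x ∈ slice 0).card : ℤ)
      = ((R.filter fun x => x ∈ slice 0).card : ℤ) := by
    rw [hslice0]
    rw [card_filter_Ico D _ _ 0 (γ 0) (hγ0 0) (fun x => Set.mem_Ico),
      card_filter_Ico R _ _ 0 (γ 0) (hγ0 0) (fun x => Set.mem_Ico), hDneg, hRneg]
    have hk := keyL 0 (Nat.zero_le K)
    unfold walkL at hk
    simp only [Finset.card_empty]
    omega
  have hcounti : ∀ i, 1 ≤ i → i ≤ K →
      ((D.filter fun x => x ∈ slice i).card : ℤ)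
        = ((R.filter fun x => x ∈ slice i).card : ℤ) + 1 := by
    intro i h1 h2
    rcases eq_or_lt_of_le h2 with hEq | hlt
    · rw [hEq, hsliceK (by omega)]
      rw [card_filter_Icc D _ _ _ ℓ (fun x hx => (hDpt x hx).2) (fun x => Set.mem_Icc),
        card_filter_Icc R _ _ _ ℓ (fun x hx => (hRpt x hx).2) (fun x => Set.mem_Icc)]
      have hk := keyL (K - 1) (by omega)
      unfold walkL at hk
      rw [hR, hD]
      omega
    · rw [hslicei i (by omega) (by omega)]
      rw [card_filter_Ico D _ _ _ _ (hγmono (i - 1) i (by omega)) (fun x => Set.mem_Ico),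
        card_filter_Ico R _ _ _ _ (hγmono (i - 1) i (by omega)) (fun x => Set.mem_Ico)]
      have e1 := keyL (i - 1) (by omega)
      have e2 := keyL i (by omega)
      unfold walkL at e1 e2
      omega
  have hcardle : ∀ i, i ≤ K →
      (R.filter fun x => x ∈ slice i).card ≤ (D.filter fun x => x ∈ slice i).card := by
    intro i hi
    rcases Nat.eq_zero_or_pos i with h0 | h0
    · rw [h0]; omega
    · have := hcounti i h0 hi; omega
  -- coverage of (0, ℓ) by the slices
  have hcover : ∀ x : ℝ, 0 < x → x < ℓ → ∃ i, i ≤ K ∧ x ∈ slice i := by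
    intro x hx0 hxℓ
    by_cases hK0 : K = 0
    · refine ⟨0, Nat.zero_le K, ?_⟩
      have hγℓ0 : γ 0 = ℓ := le_antisymm (hγle 0)
        (le_csSup (hbdd 0) ⟨le_refl ℓ, by rw [hwalkℓ, hK0]⟩)
      rw [hslice0, hγℓ0]
      exact ⟨le_of_lt hx0, hxℓ⟩
    · by_cases hlast : γ (K - 1) ≤ x
      · refine ⟨K, le_refl K, ?_⟩
        rw [hsliceK hK0]
        exact ⟨hlast, le_of_lt hxℓ⟩
      · push_neg at hlast
        have hex : ∃ j, x < γ j := ⟨K - 1, hlast⟩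
        have hi : x < γ (Nat.find hex) := Nat.find_spec hex
        have hiK : Nat.find hex ≤ K - 1 := Nat.find_le hlast
        by_cases hi0 : Nat.find hex = 0
        · refine ⟨0, Nat.zero_le K, ?_⟩
          rw [hslice0]
          exact ⟨le_of_lt hx0, by rw [← hi0]; exact hi⟩
        · have hprev : γ (Nat.find hex - 1) ≤ x := by
            have := Nat.find_min hex (m := Nat.find hex - 1) (by omega)
            exact not_lt.1 this
          refine ⟨Nat.find hex, by omega, ?_⟩
          rw [hslicei (Nat.find hex) hi0 (by omega)]
          exact ⟨hprev, hi⟩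
  -- slices are pairwise disjoint
  have hdisjS : ∀ i j, i < j → j ≤ K → ∀ x : ℝ, x ∈ slice i → x ∈ slice j → False := by
    intro i j hij hjK x hxi hxj
    have hiK : i < K := lt_of_lt_of_le hij hjK
    have hxlt : x < γ i := by
      rcases eq_or_ne i 0 with h | h
      · rw [h, hslice0] at hxi
        rw [h]
        exact hxi.2
      · rw [hslicei i h (by omega)] at hxi
        exact hxi.2
    have hxge : γ (j - 1) ≤ x := by
      rcases eq_or_ne j K with h | h
      · rw [h, hsliceK (by omega)] at hxj
        rw [h]
        exact hxj.1
      · rw [hslicei j (by omega) h] at hxj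
        exact hxj.1
    have : γ i ≤ γ (j - 1) := hγmono i (j - 1) (by omega)
    linarith
  refine ⟨?_, ?_, ?_⟩
  · rw [natCard_inter D (slice 0), natCard_inter R (slice 0)]
    exact_mod_cast hcount0
  · intro i h1 h2
    rw [natCard_inter D (slice i), natCard_inter R (slice i)]
    exact_mod_cast hcounti i h1 h2
  · -- the matching
    have hMex : ∀ i : ℕ, ∃ Mi : Finset (ℝ × ℝ),
        (∀ p ∈ Mi, p.1 ∈ R ∧ p.1 ∈ slice i ∧ p.2 ∈ D ∧ p.2 ∈ slice i) ∧
        (∀ p ∈ Mi, ∀ q ∈ Mi, p.1 = q.1 → p = q) ∧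
        (∀ p ∈ Mi, ∀ q ∈ Mi, p.2 = q.2 → p = q) ∧
        (i ≤ K → Mi.image Prod.fst = R.filter (fun x => x ∈ slice i)) := by
      intro i
      by_cases hiK : i ≤ K
      · obtain ⟨Mi, hmem, hf, hs, him⟩ := exists_pair_matching
          (R.filter fun x => x ∈ slice i) (D.filter fun x => x ∈ slice i) (hcardle i hiK)
        refine ⟨Mi, fun p hp => ?_, hf, hs, fun _ => him⟩
        obtain ⟨h1, h2⟩ := hmem p hp
        rw [Finset.mem_filter] at h1 h2
        exact ⟨h1.1, h1.2, h2.1, h2.2⟩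
      · exact ⟨∅, by simp, by simp, by simp, fun h => absurd h hiK⟩
    choose Mi hMi1 hMi2 hMi3 hMi4 using hMex
    refine ⟨(Finset.range (K + 1)).biUnion Mi, ⟨?_, ?_, ?_⟩, ?_, ?_⟩
    · intro p hp
      rw [Finset.mem_biUnion] at hp
      obtain ⟨i, _, hpi⟩ := hp
      exact ⟨(hMi1 i p hpi).1, (hMi1 i p hpi).2.2.1⟩
    · intro p hp q hq hpq
      rw [Finset.mem_biUnion] at hp hq
      obtain ⟨i, hi, hpi⟩ := hp
      obtain ⟨j, hj, hqj⟩ := hq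
      rw [Finset.mem_range] at hi hj
      have hij : i = j := by
        by_contra hne
        have h1 := (hMi1 i p hpi).2.1
        have h2 := (hMi1 j q hqj).2.1
        rw [← hpq] at h2
        rcases Nat.lt_or_ge i j with h | h
        · exact hdisjS i j h (by omega) p.1 h1 h2
        · exact hdisjS j i (by omega) (by omega) p.1 h2 h1
      subst hij
      exact hMi2 i p hpi q hqj hpq
    · intro p hp q hq hpq
      rw [Finset.mem_biUnion] at hp hq
      obtain ⟨i, hi, hpi⟩ := hp
      obtain ⟨j, hj, hqj⟩ := hq
      rw [Finset.mem_range] at hi hj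
      have hij : i = j := by
        by_contra hne
        have h1 := (hMi1 i p hpi).2.2.2
        have h2 := (hMi1 j q hqj).2.2.2
        rw [← hpq] at h2
        rcases Nat.lt_or_ge i j with h | h
        · exact hdisjS i j h (by omega) p.2 h1 h2
        · exact hdisjS j i (by omega) (by omega) p.2 h2 h1
      subst hij
      exact hMi3 i p hpi q hqj hpq
    · apply Finset.Subset.antisymm
      · intro r hr
        rw [Finset.mem_image] at hr
        obtain ⟨p, hp, hpr⟩ := hr
        rw [Finset.mem_biUnion] at hp
        obtain ⟨i, _, hpi⟩ := hp
        rw [← hpr]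
        exact (hMi1 i p hpi).1
      · intro r hr
        obtain ⟨i, hiK, hsl⟩ := hcover r (hRpt r hr).1 (hRpt r hr).2
        have hrm : r ∈ (Mi i).image Prod.fst := by
          rw [hMi4 i hiK]
          exact Finset.mem_filter.2 ⟨hr, hsl⟩
        rw [Finset.mem_image] at hrm
        obtain ⟨p, hp, hpr⟩ := hrm
        rw [Finset.mem_image]
        exact ⟨p, Finset.mem_biUnion.2 ⟨i, Finset.mem_range.2 (by omega), hp⟩, hpr⟩
    · intro p hp
      rw [Finset.mem_biUnion] at hp
      obtain ⟨i, hi, hpi⟩ := hp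
      rw [Finset.mem_range] at hi
      exact ⟨i, by omega, (hMi1 i p hpi).2.1, (hMi1 i p hpi).2.2.2⟩
end
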